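/- arXiv:1501.07687 — 11 statements merged into one kernel-verified Lean document; each statement's English description precedes it below -/
import Mathlib

section
/- Suppose every buyer's valuation is monotone (v_i(S) ≤ v_i(T) whenever S ⊆ T) and subadditive (v_i(S ∪ T) ≤ v_i(S) + v_i(T) for all sets S, T of items). Then every outcome (win, p, π) that satisfies the SPE characterization condition has social welfare at least OPT/(2m); in other words, the price of anarchy over such outcomes is at most 2m. -/
/-!
Against a deviation to any single item `t`, the SPE condition gives `v_i({t}) ≤ v_i(X_i) + p(t)`,
where `X_i` is buyer `i`'s equilibrium bundle: buyer `i` could have won `t` at its price on top of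
the part of `X_i` sold before it, and by monotonicity `{t}` is worth no more than that bundle.
Subadditivity splits `v_i(A⁻¹(i))` into at most `m` singletons, so
`OPT ≤ m · SW + Σ_t p(t)`, and the revenue is at most `SW` because utilities are nonnegative.
-/

open Finset

/-- The set of items that buyer `i` wins among the first `j` items sold, where
`π` is the selling order (`π k` is the `(k+1)`-st item sold) and `win t` is the
buyer who wins item `t`. -/
def soldTo {N : Type*} [DecidableEq N] {m : ℕ} (win : Fin m → N)
    (π : Equiv.Perm (Fin m)) (i : N) (j : ℕ) : Finset (Fin m) :=
  Finset.univ.filter fun t => ((π.symm t : ℕ) < j ∧ win t = i)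

/-- Buyer `i`'s utility at the end of the sequential auction. -/
def util {N : Type*} [DecidableEq N] {m : ℕ} (v : N → Finset (Fin m) → ℝ)
    (win : Fin m → N) (p : Fin m → ℝ) (π : Equiv.Perm (Fin m)) (i : N) : ℝ :=
  v i (soldTo win π i m) - ∑ k ∈ soldTo win π i m, p k

/-- The SPE characterization condition: prices are nonnegative, every buyer has
nonnegative utility, and no buyer prefers snatching an item `π k` (after
winning exactly his equilibrium items among the first `k` items sold) to his
equilibrium utility. -/
def SPECond {N : Type*} [DecidableEq N] {m : ℕ} (v : N → Finset (Fin m) → ℝ)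
    (win : Fin m → N) (p : Fin m → ℝ) (π : Equiv.Perm (Fin m)) : Prop :=
  (∀ j, 0 ≤ p j) ∧
  (∀ i, 0 ≤ util v win p π i) ∧
  ∀ (i : N) (k : Fin m),
    v i (insert (π k) (soldTo win π i (k : ℕ))) - p (π k)
        - ∑ t ∈ soldTo win π i (k : ℕ), p t ≤ util v win p π i

theorem le_sum_singleton_of_subadditive {α : Type*} [DecidableEq α] {f : Finset α → ℝ}
    (h_empty : f ∅ = 0) (h_sub : ∀ S T, f (S ∪ T) ≤ f S + f T) (S : Finset α) :
    f S ≤ ∑ t ∈ S, f {t} := by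
  simpa only [sup_singleton_eq_self] using
    S.apply_sup_le_sum (f := f) (s := singleton) h_empty (h_sub _ _)

section soldTo

variable {N : Type*} [DecidableEq N] {m : ℕ} (win : Fin m → N) (π : Equiv.Perm (Fin m))

theorem mem_soldTo_self {i : N} {t : Fin m} : t ∈ soldTo win π i m ↔ win t = i := by
  simp [soldTo]

theorem soldTo_subset_soldTo_self (i : N) (j : ℕ) : soldTo win π i j ⊆ soldTo win π i m :=
  fun _ ht => (mem_soldTo_self win π).2 (mem_filter.1 ht).2.2

theorem sum_sum_soldTo_self [Fintype N] (f : Fin m → ℝ) :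
    ∑ i, ∑ t ∈ soldTo win π i m, f t = ∑ t, f t := by
  rw [← sum_fiberwise univ win f]
  refine sum_congr rfl fun i _ => sum_congr ?_ fun _ _ => rfl
  ext t
  simp [mem_soldTo_self]

end soldTo

namespace SPECond

variable {N : Type*} [DecidableEq N] {m : ℕ} {v : N → Finset (Fin m) → ℝ} {win : Fin m → N}
  {p : Fin m → ℝ} {π : Equiv.Perm (Fin m)}

theorem sum_price_le_value (h : SPECond v win p π) (i : N) :
    ∑ t ∈ soldTo win π i m, p t ≤ v i (soldTo win π i m) :=
  sub_nonneg.1 (h.2.1 i)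

theorem value_nonneg (h : SPECond v win p π) (i : N) : 0 ≤ v i (soldTo win π i m) :=
  (sum_nonneg fun t _ => h.1 t).trans (h.sum_price_le_value i)

theorem revenue_le_welfare [Fintype N] (h : SPECond v win p π) :
    ∑ t, p t ≤ ∑ i, v i (soldTo win π i m) := by
  rw [← sum_sum_soldTo_self win π p]
  exact sum_le_sum fun i _ => h.sum_price_le_value i

theorem value_singleton_le_add_price (h : SPECond v win p π)
    (hmono : ∀ i S T, S ⊆ T → v i S ≤ v i T) (i : N) (t : Fin m) :
    v i {t} ≤ v i (soldTo win π i m) + p t := by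
  obtain ⟨hp, -, hdev⟩ := h
  have hdev_t := hdev i (π.symm t)
  rw [Equiv.apply_symm_apply] at hdev_t
  have hprices : ∑ s ∈ soldTo win π i (π.symm t), p s ≤ ∑ s ∈ soldTo win π i m, p s :=
    sum_le_sum_of_subset_of_nonneg (soldTo_subset_soldTo_self win π i _) fun s _ _ => hp s
  have hsingle : v i {t} ≤ v i (insert t (soldTo win π i (π.symm t))) :=
    hmono i _ _ (singleton_subset_iff.2 (mem_insert_self _ _))
  unfold util at hdev_t
  linarith

theorem value_le_mul_add_sum_price (h : SPECond v win p π) (hempty : ∀ i, v i ∅ = 0)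
    (hmono : ∀ i S T, S ⊆ T → v i S ≤ v i T) (hsub : ∀ i S T, v i (S ∪ T) ≤ v i S + v i T)
    (i : N) (S : Finset (Fin m)) :
    v i S ≤ m * v i (soldTo win π i m) + ∑ t ∈ S, p t := by
  have hcard : (S.card : ℝ) ≤ m := by
    exact_mod_cast (card_le_univ S).trans_eq (Fintype.card_fin m)
  calc v i S ≤ ∑ t ∈ S, v i {t} := le_sum_singleton_of_subadditive (hempty i) (hsub i) S
    _ ≤ ∑ t ∈ S, (v i (soldTo win π i m) + p t) :=
        sum_le_sum fun t _ => h.value_singleton_le_add_price hmono i t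
    _ = S.card * v i (soldTo win π i m) + ∑ t ∈ S, p t := by
        rw [sum_add_distrib, sum_const, nsmul_eq_mul]
    _ ≤ m * v i (soldTo win π i m) + ∑ t ∈ S, p t := by
        gcongr
        exact h.value_nonneg i

end SPECond

/-- For monotone subadditive valuations, every outcome satisfying the SPE
characterization condition has social welfare at least `OPT / (2m)`:
the price of anarchy over such outcomes is at most `2m`. -/
theorem poa_subadditive_le_two_m {N : Type*} [Fintype N] [DecidableEq N]
    {m : ℕ} (hm : 1 ≤ m)
    (v : N → Finset (Fin m) → ℝ)
    (hempty : ∀ i, v i ∅ = 0)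
    (hmono : ∀ i S T, S ⊆ T → v i S ≤ v i T)
    (hsub : ∀ i S T, v i (S ∪ T) ≤ v i S + v i T)
    (win : Fin m → N) (p : Fin m → ℝ) (π : Equiv.Perm (Fin m))
    (hspe : SPECond v win p π) :
    ∀ A : Fin m → N,
      ∑ i, v i (Finset.univ.filter fun j => A j = i)
        ≤ 2 * (m : ℝ) * ∑ i, v i (soldTo win π i m) := by
  intro A
  set W := ∑ i, v i (soldTo win π i m)
  have hW : W ≤ m * W :=
    le_mul_of_one_le_left (sum_nonneg fun i _ => hspe.value_nonneg i) (by exact_mod_cast hm)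
  calc ∑ i, v i (univ.filter fun j => A j = i)
      ≤ ∑ i, (m * v i (soldTo win π i m) + ∑ t ∈ univ.filter (fun j => A j = i), p t) :=
        sum_le_sum fun i _ => hspe.value_le_mul_add_sum_price hempty hmono hsub i _
    _ = m * W + ∑ t, p t := by rw [sum_add_distrib, ← mul_sum, sum_fiberwise]
    _ ≤ m * W + m * W := by gcongr; exact hspe.revenue_le_welfare.trans hW
    _ = 2 * m * W := by ring
end

section
/- Let m ≥ 1 and consider the sequential-auction market with m items and two additive buyers A and B, where A values every item at m and B values every item at 1 (so v_A(S) = m·|S| and v_B(S) = |S|). Then for any selling order π, the outcome in which buyer B wins the first m−1 items sold and buyer A wins the last item sold, each item at price 1, satisfies the SPE characterization condition; its social welfare is 2m − 1, while the optimal social welfare OPT equals m². In particular, the price of anarchy over outcomes satisfying the condition is at least m²/(2m−1), which is Ω(m). -/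
/-!
With unit prices an additive buyer's utility from a bundle is the sum of its per-item surpluses
`value - 1`. Buyer B's surplus is `0` on every item, so B never gains by deviating; buyer A's
surplus is `m - 1` on every item, and since A wins nothing before the last item, grabbing the
current item instead yields exactly the utility `m - 1` of winning the last one. An allocation
giving `a` items to A has welfare `m * a + (m - a) = m + (m - 1) * a`, which is `2m - 1` for the
outcome (`a = 1`) and at most `m ^ 2`, attained when A gets everything (`a = m`).
-/

open Finset

section SoldTo

variable {N : Type*} [DecidableEq N] {m : ℕ}

theorem apply_notMem_soldTo (win : Fin m → N) (π : Equiv.Perm (Fin m)) (i : N) (k : Fin m) :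
    π k ∉ soldTo win π i k := by
  simp [soldTo]

theorem soldTo_self (win : Fin m → N) (π : Equiv.Perm (Fin m)) (i : N) :
    soldTo win π i m = univ.filter fun t => win t = i := by
  ext t
  simp [soldTo]

def welfare [Fintype N] (v : N → Finset (Fin m) → ℝ) (A : Fin m → N) : ℝ :=
  ∑ i, v i (univ.filter fun j => A j = i)

theorem sum_soldTo_self [Fintype N] (v : N → Finset (Fin m) → ℝ) (win : Fin m → N)
    (π : Equiv.Perm (Fin m)) : ∑ i, v i (soldTo win π i m) = welfare v win := by
  simp only [soldTo_self, welfare]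

theorem SPECond_iff_of_additive (v : N → Finset (Fin m) → ℝ) (w : N → Fin m → ℝ)
    (hv : ∀ i S, v i S = ∑ t ∈ S, w i t) (win : Fin m → N) (p : Fin m → ℝ)
    (π : Equiv.Perm (Fin m)) :
    SPECond v win p π ↔ (∀ j, 0 ≤ p j) ∧
      (∀ i, 0 ≤ ∑ t ∈ soldTo win π i m, (w i t - p t)) ∧
      ∀ i (k : Fin m), ∑ t ∈ insert (π k) (soldTo win π i k), (w i t - p t) ≤
        ∑ t ∈ soldTo win π i m, (w i t - p t) := by
  have hutil : ∀ i, util v win p π i = ∑ t ∈ soldTo win π i m, (w i t - p t) := by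
    simp only [util, hv, sum_sub_distrib, implies_true]
  have hdev : ∀ i (k : Fin m), v i (insert (π k) (soldTo win π i k)) - p (π k)
      - ∑ t ∈ soldTo win π i k, p t
        = ∑ t ∈ insert (π k) (soldTo win π i k), (w i t - p t) := by
    intro i k
    simp only [hv, sum_insert (apply_notMem_soldTo win π i k), sum_sub_distrib]
    ring
  simp only [SPECond, hutil, hdev]

end SoldTo

def lastToZero {m : ℕ} (π : Equiv.Perm (Fin m)) (t : Fin m) : Fin 2 :=
  if (π.symm t : ℕ) = m - 1 then 0 else 1

section LastToZero

variable {m : ℕ} (π : Equiv.Perm (Fin m))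

theorem soldTo_lastToZero_zero (k : Fin m) : soldTo (lastToZero π) π 0 k = ∅ := by
  refine eq_empty_of_forall_notMem fun t ht => ?_
  obtain ⟨-, hbefore, hzero⟩ := mem_filter.1 ht
  have hlast : (π.symm t : ℕ) = m - 1 := by
    by_contra h
    simp [lastToZero, h] at hzero
  omega

theorem filter_lastToZero_eq_zero (hm : 1 ≤ m) :
    univ.filter (fun t => lastToZero π t = 0) = {π ⟨m - 1, by omega⟩} := by
  ext t
  rw [mem_filter, mem_singleton, ← π.symm_apply_eq]
  simp [lastToZero, Fin.ext_iff]

end LastToZero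

section TwoBuyers

variable {m : ℕ} (v : Fin 2 → Finset (Fin m) → ℝ)

theorem welfare_eq_add_mul_card
    (hv : ∀ i S, v i S = ∑ _j ∈ S, (if i = 0 then (m : ℝ) else 1)) (A : Fin m → Fin 2) :
    welfare v A = m + (m - 1) * (univ.filter fun j => A j = 0).card := by
  have hcard : (univ.filter fun j => A j = 0).card + (univ.filter fun j => A j = 1).card = m := by
    simpa [Fin.sum_univ_two] using (card_eq_sum_card_fiberwise (s := univ) (t := univ)
      (f := A) fun _ _ => mem_univ _).symm
  have hcard' : ((univ.filter fun j => A j = 1).card : ℝ) =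
      m - (univ.filter fun j => A j = 0).card := by
    rw [eq_sub_iff_add_eq']
    exact_mod_cast hcard
  simp only [welfare, Fin.sum_univ_two, hv, sum_const, nsmul_eq_mul, hcard', if_pos,
    one_ne_zero, if_false]
  ring

theorem SPECond_lastToZero
    (hv : ∀ i S, v i S = ∑ _j ∈ S, (if i = 0 then (m : ℝ) else 1))
    (hm : 1 ≤ m) (π : Equiv.Perm (Fin m)) :
    SPECond v (lastToZero π) (fun _ => 1) π := by
  rw [SPECond_iff_of_additive v _ hv]
  refine ⟨fun _ => zero_le_one, Fin.forall_fin_two.2 ⟨?_, by simp⟩,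
    Fin.forall_fin_two.2 ⟨fun k => ?_, fun k => by simp⟩⟩
  · simp only [soldTo_self, filter_lastToZero_eq_zero π hm]
    simpa using (Nat.one_le_cast.2 hm : (1 : ℝ) ≤ m)
  · simp [soldTo_self, filter_lastToZero_eq_zero π hm, soldTo_lastToZero_zero]

end TwoBuyers

/-- Two additive buyers: buyer `0` (buyer A) values every item at `m`, buyer
`1` (buyer B) values every item at `1`.  For any selling order, the outcome in
which B wins the first `m - 1` items sold and A wins the last item sold, every
item at price `1`, satisfies the SPE characterization condition; its social
welfare is `2m - 1` while the optimal social welfare is `m ^ 2`.  Hence the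
price of anarchy over such outcomes is at least `m ^ 2 / (2m - 1) = Ω(m)`. -/
theorem poa_additive_lower_bound (m : ℕ) (hm : 1 ≤ m)
    (v : Fin 2 → Finset (Fin m) → ℝ)
    (hv : ∀ i S, v i S = ∑ _j ∈ S, (if i = 0 then (m : ℝ) else 1))
    (π : Equiv.Perm (Fin m))
    (win : Fin m → Fin 2)
    (hwin : ∀ j, win j = if (π.symm j : ℕ) = m - 1 then 0 else 1)
    (p : Fin m → ℝ) (hp : ∀ j, p j = 1) :
    SPECond v win p π ∧
    (∑ i, v i (soldTo win π i m)) = 2 * (m : ℝ) - 1 ∧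
    (∀ A : Fin m → Fin 2,
      ∑ i, v i (Finset.univ.filter fun j => A j = i) ≤ (m : ℝ) ^ 2) ∧
    (∃ A : Fin m → Fin 2,
      ∑ i, v i (Finset.univ.filter fun j => A j = i) = (m : ℝ) ^ 2) := by
  obtain rfl : win = lastToZero π := funext hwin
  obtain rfl : p = fun _ => 1 := funext hp
  refine ⟨SPECond_lastToZero v hv hm π, ?_, fun A => ?_, ⟨fun _ => 0, ?_⟩⟩
  · rw [sum_soldTo_self, welfare_eq_add_mul_card v hv, filter_lastToZero_eq_zero π hm, card_singleton]
    push_cast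
    ring
  · have hA : ((univ.filter fun j => A j = 0).card : ℝ) ≤ m := by
      exact_mod_cast (card_filter_le _ _).trans (card_fin m).le
    have hm' : (0 : ℝ) ≤ m - 1 := by
      rw [sub_nonneg]
      exact_mod_cast hm
    calc welfare v A = m + (m - 1) * (univ.filter fun j => A j = 0).card := welfare_eq_add_mul_card v hv A
      _ ≤ m + (m - 1) * m := by gcongr
      _ = m ^ 2 := by ring
  · rw [← welfare, welfare_eq_add_mul_card v hv, filter_true_of_mem fun _ _ => rfl, card_univ, Fintype.card_fin]
    ring
end

section
/- Suppose every buyer's valuation is monotone (v_i(S) ≤ v_i(T) whenever S ⊆ T), satisfies v_i(∅) = 0, and is non-singleton, meaning v_i({j}) = 0 for every buyer i and every item j. Then for any fixed buyer i₀ and any selling order π, the outcome in which buyer i₀ wins every item and every price is zero satisfies the SPE characterization condition. -/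
/-!
With all prices zero, the SPE condition only compares values of bundles. The buyer `i₀` ends
with every item, so by monotonicity no deviation can beat his final bundle; every other buyer
ends with nothing, and a deviation would give him a single item, which is worth nothing.
-/

open Finset

section ZeroPrice

variable {N : Type*} [DecidableEq N] {m : ℕ}

lemma util_zero_price (v : N → Finset (Fin m) → ℝ) (win : Fin m → N)
    (π : Equiv.Perm (Fin m)) (i : N) :
    util v win (fun _ => 0) π i = v i (soldTo win π i m) := by
  simp [util]

lemma specCond_zero_price_iff (v : N → Finset (Fin m) → ℝ) (win : Fin m → N)
    (π : Equiv.Perm (Fin m)) :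
    SPECond v win (fun _ => 0) π ↔
      (∀ i, 0 ≤ v i (soldTo win π i m)) ∧
      ∀ i (k : Fin m), v i (insert (π k) (soldTo win π i k)) ≤ v i (soldTo win π i m) := by
  simp [SPECond, util_zero_price]

lemma soldTo_const_of_ne {i₀ i : N} (h : i ≠ i₀) (π : Equiv.Perm (Fin m)) (j : ℕ) :
    soldTo (fun _ => i₀) π i j = ∅ := by
  simp [soldTo, h.symm]

lemma soldTo_const_self (i : N) (π : Equiv.Perm (Fin m)) :
    soldTo (fun _ => i) π i m = univ := by
  ext t
  simp [soldTo]

end ZeroPrice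

theorem non_singleton_zero_price_SPE_general {N : Type*} [DecidableEq N]
    {m : ℕ}
    (v : N → Finset (Fin m) → ℝ)
    (hempty : ∀ i, v i ∅ = 0)
    (hmono : ∀ i S T, S ⊆ T → v i S ≤ v i T)
    (hsingle : ∀ (i : N) (j : Fin m), v i {j} = 0)
    (i₀ : N) (π : Equiv.Perm (Fin m)) :
    SPECond v (fun _ => i₀) (fun _ => 0) π := by
  rw [specCond_zero_price_iff]
  refine ⟨fun i => ?_, fun i k => ?_⟩ <;> obtain rfl | hi := eq_or_ne i i₀
  · rw [soldTo_const_self, ← hempty i]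
    exact hmono i _ _ (empty_subset _)
  · rw [soldTo_const_of_ne hi, hempty]
  · rw [soldTo_const_self]
    exact hmono i _ _ (subset_univ _)
  · rw [soldTo_const_of_ne hi, soldTo_const_of_ne hi, insert_empty, hsingle, hempty]

/-- If all buyers have monotone, normalized, non-singleton valuations
(`v i {j} = 0` for every buyer `i` and item `j`), then for any buyer `i₀` and
any selling order the outcome in which `i₀` wins every item at price zero
satisfies the SPE characterization condition. -/
theorem non_singleton_zero_price_SPE {N : Type*} [Fintype N] [DecidableEq N]
    {m : ℕ} (hm : 1 ≤ m)
    (v : N → Finset (Fin m) → ℝ)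
    (hempty : ∀ i, v i ∅ = 0)
    (hmono : ∀ i S T, S ⊆ T → v i S ≤ v i T)
    (hsingle : ∀ (i : N) (j : Fin m), v i {j} = 0)
    (i₀ : N) (π : Equiv.Perm (Fin m)) :
    SPECond v (fun _ => i₀) (fun _ => 0) π :=
  non_singleton_zero_price_SPE_general v hempty hmono hsingle i₀ π
end

section
/- Suppose every buyer's valuation is monotone (v_i(S) ≤ v_i(T) whenever S ⊆ T), submodular (v_i(S ∪ {g}) − v_i(S) ≥ v_i(T ∪ {g}) − v_i(T) whenever S ⊆ T and g ∉ T), and satisfies v_i(∅) = 0. Then there exists an outcome (win, p, π) satisfying the SPE characterization condition in which every buyer's utility u_i equals 0 and the revenue Σ_{j∈M} p(j) is at least OPT/2; that is, the seller extracts at least half of the optimal social welfare as revenue and the buyers get no utility. -/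
open Finset

/-!
Sell the items in their natural order, give each item to a buyer with the largest marginal value
for it given what the buyers already hold, and charge exactly that marginal value. Every buyer then
pays his value for his bundle, so all utilities vanish, and no buyer gains by taking an item out of
turn because its price is the largest marginal value. By submodularity, the marginal value of any
item for a buyer's final bundle is at most its price; hence each buyer's value for his bundle in an
optimal allocation is at most his greedy value plus the prices of that bundle, and summing gives
`OPT ≤ revenue + revenue`.
-/

section Submodular

variable {α : Type*} [DecidableEq α]

def marginal (w : Finset α → ℝ) (S : Finset α) (g : α) : ℝ :=
  w (insert g S) - w S

theorem union_le_add_sum_marginal (w : Finset α → ℝ)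
    (hsub : ∀ S T g, S ⊆ T → g ∉ T → marginal w T g ≤ marginal w S g) (S T : Finset α) :
    w (S ∪ T) ≤ w T + ∑ g ∈ S \ T, marginal w T g := by
  induction S using Finset.induction with
  | empty => simp
  | @insert a S ha ih =>
    by_cases haT : a ∈ T
    · rwa [insert_union, insert_eq_of_mem (mem_union_right S haT), insert_sdiff_of_mem _ haT]
    · have haST : a ∉ S ∪ T := by simp [ha, haT]
      have hstep := hsub T (S ∪ T) a subset_union_right haST
      rw [insert_union, insert_sdiff_of_notMem _ haT,
        sum_insert fun h => ha (mem_sdiff.1 h).1]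
      unfold marginal at hstep ih ⊢
      linarith

variable [Fintype α] {N : Type*} [Fintype N] [DecidableEq N]

theorem welfare_le_two_mul_revenue (v : N → Finset α → ℝ)
    (hmono : ∀ i S T, S ⊆ T → v i S ≤ v i T)
    (hsub : ∀ i S T g, S ⊆ T → g ∉ T → marginal (v i) T g ≤ marginal (v i) S g)
    (win : α → N) (p : α → ℝ) (hp : ∀ g, 0 ≤ p g)
    (hval : ∀ i, v i (univ.filter (win · = i)) ≤ ∑ g ∈ univ.filter (win · = i), p g)
    (hmarg : ∀ i g, marginal (v i) (univ.filter (win · = i)) g ≤ p g) (A : α → N) :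
    ∑ i, v i (univ.filter (A · = i)) ≤ 2 * ∑ g, p g := by
  have hbuyer : ∀ i, v i (univ.filter (A · = i)) ≤
      ∑ g ∈ univ.filter (win · = i), p g + ∑ g ∈ univ.filter (A · = i), p g := by
    intro i
    set X := univ.filter (win · = i)
    set Y := univ.filter (A · = i)
    calc v i Y ≤ v i (Y ∪ X) := hmono i _ _ subset_union_left
      _ ≤ v i X + ∑ g ∈ Y \ X, marginal (v i) X g := union_le_add_sum_marginal _ (hsub i) Y X
      _ ≤ ∑ g ∈ X, p g + ∑ g ∈ Y \ X, p g :=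
        add_le_add (hval i) (sum_le_sum fun g _ => hmarg i g)
      _ ≤ ∑ g ∈ X, p g + ∑ g ∈ Y, p g :=
        add_le_add le_rfl (sum_le_sum_of_subset_of_nonneg sdiff_subset fun g _ _ => hp g)
  calc ∑ i, v i (univ.filter (A · = i))
      ≤ ∑ i, (∑ g ∈ univ.filter (win · = i), p g + ∑ g ∈ univ.filter (A · = i), p g) :=
        sum_le_sum fun i _ => hbuyer i
    _ = 2 * ∑ g, p g := by
        rw [sum_add_distrib, sum_fiberwise, sum_fiberwise, two_mul]

end Submodular

noncomputable def argmax {N : Type*} [Finite N] [Nonempty N] (f : N → ℝ) : N :=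
  Classical.choose (Finite.exists_max f)

theorem le_argmax {N : Type*} [Finite N] [Nonempty N] (f : N → ℝ) (i : N) :
    f i ≤ f (argmax f) :=
  Classical.choose_spec (Finite.exists_max f) i

section Greedy

variable {N : Type*} [Finite N] [Nonempty N] [DecidableEq N] {m : ℕ} (v : N → Finset (Fin m) → ℝ)

/-- `greedyBundle v k i` is what buyer `i` holds after the greedy auction has sold the items
`0, …, k - 1`. -/
noncomputable def greedyBundle : ℕ → N → Finset (Fin m)
  | 0, _ => ∅
  | k + 1, i =>
    if h : k < m then
      if argmax (fun j => marginal (v j) (greedyBundle k j) ⟨k, h⟩) = i then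
        insert ⟨k, h⟩ (greedyBundle k i)
      else greedyBundle k i
    else greedyBundle k i

noncomputable def greedyWinner (g : Fin m) : N :=
  argmax fun j => marginal (v j) (greedyBundle v g j) g

noncomputable def greedyPrice (g : Fin m) : ℝ :=
  marginal (v (greedyWinner v g)) (greedyBundle v g (greedyWinner v g)) g

theorem greedyBundle_succ {k : ℕ} (h : k < m) (i : N) :
    greedyBundle v (k + 1) i =
      if greedyWinner v ⟨k, h⟩ = i then insert ⟨k, h⟩ (greedyBundle v k i)
      else greedyBundle v k i := by
  rw [greedyBundle, dif_pos h]
  rfl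

theorem greedyBundle_succ_of_le {k : ℕ} (h : m ≤ k) (i : N) :
    greedyBundle v (k + 1) i = greedyBundle v k i := by
  rw [greedyBundle, dif_neg h.not_gt]

theorem mem_greedyBundle {k : ℕ} {i : N} {t : Fin m} :
    t ∈ greedyBundle v k i ↔ (t : ℕ) < k ∧ greedyWinner v t = i := by
  induction k with
  | zero => simp [greedyBundle]
  | succ k ih =>
    rcases lt_or_ge k m with h | h
    · rw [greedyBundle_succ v h]
      by_cases ht : t = ⟨k, h⟩
      · subst ht
        split_ifs with hw <;> simp [ih, hw]
      · have ht' : (t : ℕ) ≠ k := fun e => ht (Fin.ext e)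
        split_ifs <;> simp [ht, ih] <;> omega
    · rw [greedyBundle_succ_of_le v h, ih]
      have := t.isLt
      constructor <;> rintro ⟨_, hw⟩ <;> exact ⟨by omega, hw⟩

theorem greedyBundle_mono {k k' : ℕ} (hk : k ≤ k') (i : N) :
    greedyBundle v k i ⊆ greedyBundle v k' i := fun t ht => by
  rw [mem_greedyBundle] at ht ⊢
  exact ⟨ht.1.trans_le hk, ht.2⟩

theorem greedyBundle_eq_filter (i : N) :
    greedyBundle v m i = univ.filter (greedyWinner v · = i) := by
  ext t
  simp [mem_greedyBundle, t.isLt]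

theorem soldTo_greedyWinner (i : N) (j : ℕ) :
    soldTo (greedyWinner v) (Equiv.refl _) i j = greedyBundle v j i := by
  ext t
  rw [soldTo, mem_filter, mem_greedyBundle]
  simp

theorem marginal_le_greedyPrice (i : N) (g : Fin m) :
    marginal (v i) (greedyBundle v g i) g ≤ greedyPrice v g :=
  le_argmax (fun j => marginal (v j) (greedyBundle v g j) g) i

theorem greedyPrice_nonneg (hmono : ∀ i S T, S ⊆ T → v i S ≤ v i T) (g : Fin m) :
    0 ≤ greedyPrice v g :=
  sub_nonneg.2 (hmono _ _ _ (subset_insert _ _))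

theorem apply_greedyBundle (hempty : ∀ i, v i ∅ = 0) (k : ℕ) (i : N) :
    v i (greedyBundle v k i) = ∑ t ∈ greedyBundle v k i, greedyPrice v t := by
  induction k with
  | zero => simp [greedyBundle, hempty]
  | succ k ih =>
    rcases lt_or_ge k m with h | h
    · rw [greedyBundle_succ v h]
      split_ifs with hw
      · have hnew : (⟨k, h⟩ : Fin m) ∉ greedyBundle v k i := by simp [mem_greedyBundle]
        rw [sum_insert hnew, ← ih, greedyPrice, hw, marginal]
        ring
      · exact ih
    · rwa [greedyBundle_succ_of_le v h]

theorem marginal_greedyBundle_le_greedyPrice (hmono : ∀ i S T, S ⊆ T → v i S ≤ v i T)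
    (hsub : ∀ i S T g, S ⊆ T → g ∉ T → marginal (v i) T g ≤ marginal (v i) S g)
    (i : N) (g : Fin m) :
    marginal (v i) (greedyBundle v m i) g ≤ greedyPrice v g := by
  by_cases hg : g ∈ greedyBundle v m i
  · rw [marginal, insert_eq_of_mem hg, sub_self]
    exact greedyPrice_nonneg v hmono g
  · calc marginal (v i) (greedyBundle v m i) g
        ≤ marginal (v i) (greedyBundle v g i) g :=
          hsub i _ _ g (greedyBundle_mono v g.isLt.le i) hg
      _ ≤ greedyPrice v g := marginal_le_greedyPrice v i g

theorem util_greedy (hempty : ∀ i, v i ∅ = 0) (i : N) :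
    util v (greedyWinner v) (greedyPrice v) (Equiv.refl _) i = 0 := by
  rw [util, soldTo_greedyWinner, apply_greedyBundle v hempty, sub_self]

theorem specCond_greedy (hempty : ∀ i, v i ∅ = 0) (hmono : ∀ i S T, S ⊆ T → v i S ≤ v i T) :
    SPECond v (greedyWinner v) (greedyPrice v) (Equiv.refl _) := by
  refine ⟨greedyPrice_nonneg v hmono, fun i => (util_greedy v hempty i).ge, fun i k => ?_⟩
  rw [util_greedy v hempty, soldTo_greedyWinner, Equiv.refl_apply,
    ← apply_greedyBundle v hempty]
  have := marginal_le_greedyPrice v i k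
  rw [marginal] at this
  linarith

end Greedy

theorem high_revenue_submodular_SPE_general {N : Type*} [Fintype N] [DecidableEq N]
    [Nonempty N] {m : ℕ}
    (v : N → Finset (Fin m) → ℝ)
    (hempty : ∀ i, v i ∅ = 0)
    (hmono : ∀ i S T, S ⊆ T → v i S ≤ v i T)
    (hsubmod : ∀ (i : N) (S T : Finset (Fin m)) (g : Fin m), S ⊆ T → g ∉ T →
        v i (insert g T) - v i T ≤ v i (insert g S) - v i S) :
    ∃ (win : Fin m → N) (p : Fin m → ℝ) (π : Equiv.Perm (Fin m)),
      SPECond v win p π ∧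
      (∀ i, util v win p π i = 0) ∧
      ∀ A : Fin m → N,
        ∑ i, v i (Finset.univ.filter fun j => A j = i) ≤ 2 * ∑ j, p j := by
  refine ⟨greedyWinner v, greedyPrice v, Equiv.refl _, specCond_greedy v hempty hmono,
    util_greedy v hempty, fun A => ?_⟩
  refine welfare_le_two_mul_revenue v hmono hsubmod (greedyWinner v) (greedyPrice v)
    (greedyPrice_nonneg v hmono) (fun i => ?_) (fun i => ?_) A
  · rw [← greedyBundle_eq_filter, apply_greedyBundle v hempty]
  · rw [← greedyBundle_eq_filter]
    exact marginal_greedyBundle_le_greedyPrice v hmono hsubmod i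

/-- If all buyers have monotone, submodular, normalized valuations, then there
is an outcome satisfying the SPE characterization condition in which every
buyer's utility is `0` and the revenue is at least half of the optimal social
welfare: the seller extracts at least `OPT / 2` as revenue. -/
theorem high_revenue_submodular_SPE {N : Type*} [Fintype N] [DecidableEq N]
    [Nonempty N] {m : ℕ} (hm : 1 ≤ m)
    (v : N → Finset (Fin m) → ℝ)
    (hempty : ∀ i, v i ∅ = 0)
    (hmono : ∀ i S T, S ⊆ T → v i S ≤ v i T)
    (hsubmod : ∀ (i : N) (S T : Finset (Fin m)) (g : Fin m), S ⊆ T → g ∉ T →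
        v i (insert g T) - v i T ≤ v i (insert g S) - v i S) :
    ∃ (win : Fin m → N) (p : Fin m → ℝ) (π : Equiv.Perm (Fin m)),
      SPECond v win p π ∧
      (∀ i, util v win p π i = 0) ∧
      ∀ A : Fin m → N,
        ∑ i, v i (Finset.univ.filter fun j => A j = i) ≤ 2 * ∑ j, p j :=
  high_revenue_submodular_SPE_general v hempty hmono hsubmod
end

section
/- In a unit-demand market, if (win, p¹) and (win, p²) are both Walrasian equilibria with the same allocation win, then (win, p), where p_j = min(p¹_j, p²_j) for every item j, is also a Walrasian equilibrium. -/
/-- A Walrasian equilibrium in a unit-demand market with per-item values `v`: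
an injective allocation `win` (each item is sold, each buyer wins at most one
item) and nonnegative prices `p` such that every winner gets nonnegative
utility from his item and weakly prefers it to every other item, and every
buyer who wins nothing cannot afford any item. -/
def IsWE {N M : Type*} (v : N → M → ℝ) (win : M → N) (p : M → ℝ) : Prop :=
  Function.Injective win ∧
  (∀ j, 0 ≤ p j) ∧
  (∀ j, 0 ≤ v (win j) j - p j) ∧
  (∀ j k, v (win j) k - p k ≤ v (win j) j - p j) ∧
  (∀ i, (∀ j, win j ≠ i) → ∀ j, v i j ≤ p j)

/-! Under the minimum prices a buyer's utility for each item is the larger of his utilities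
under `p₁` and `p₂`. A winner's utility for any item is dominated by his utility for his own item
under each price vector separately, hence also under the maximum of the two. -/

theorem sub_min_le_sub_min {α : Type*} [AddCommGroup α] [LinearOrder α] [IsOrderedAddMonoid α]
    {a b x₁ x₂ y₁ y₂ : α} (h₁ : a - x₁ ≤ b - y₁) (h₂ : a - x₂ ≤ b - y₂) :
    a - min x₁ x₂ ≤ b - min y₁ y₂ := by
  rcases le_total x₁ x₂ with hx | hx
  · calc a - min x₁ x₂ = a - x₁ := by rw [min_eq_left hx]
      _ ≤ b - y₁ := h₁
      _ ≤ b - min y₁ y₂ := sub_le_sub_left (min_le_left _ _) _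
  · calc a - min x₁ x₂ = a - x₂ := by rw [min_eq_right hx]
      _ ≤ b - y₂ := h₂
      _ ≤ b - min y₁ y₂ := sub_le_sub_left (min_le_right _ _) _

theorem min_prices_walrasian_general {N M : Type*}
    (v : N → M → ℝ)
    (win : M → N) (p₁ p₂ : M → ℝ)
    (h₁ : IsWE v win p₁) (h₂ : IsWE v win p₂) :
    IsWE v win (fun j => min (p₁ j) (p₂ j)) := by
  obtain ⟨hinj, hp₁, hw₁, hpref₁, hl₁⟩ := h₁
  obtain ⟨-, hp₂, -, hpref₂, hl₂⟩ := h₂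
  exact ⟨hinj, fun j => le_min (hp₁ j) (hp₂ j),
    fun j => (hw₁ j).trans (sub_le_sub_left (min_le_left _ _) _),
    fun j k => sub_min_le_sub_min (hpref₁ j k) (hpref₂ j k),
    fun i hi j => le_min (hl₁ i hi j) (hl₂ i hi j)⟩

/-- If `(win, p¹)` and `(win, p²)` are Walrasian equilibria of a unit-demand
market with the same allocation, then so is `(win, p)` where
`p j = min (p¹ j) (p² j)` for every item `j`. -/
theorem min_prices_walrasian {N M : Type*} [Fintype N] [Fintype M]
    (v : N → M → ℝ) (hv : ∀ i j, 0 ≤ v i j)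
    (win : M → N) (p₁ p₂ : M → ℝ)
    (h₁ : IsWE v win p₁) (h₂ : IsWE v win p₂) :
    IsWE v win (fun j => min (p₁ j) (p₂ j)) :=
  min_prices_walrasian_general v win p₁ p₂ h₁ h₂
end

section
/- In a unit-demand market, assume at least one Walrasian equilibrium exists and all Walrasian equilibria have the same allocation win (for instance, because the welfare-maximizing allocation is unique). Then there exist minimum Walrasian prices: a Walrasian equilibrium (win, p*) such that p*_j ≤ p_j for every item j and every Walrasian equilibrium (win, p). -/
section

variable {N M ι : Type*} {v : N → M → ℝ} {win : M → N} {P : ι → M → ℝ}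

lemma bddBelow_range_of_forall_isWE (hP : ∀ i, IsWE v win (P i)) (j : M) :
    BddBelow (Set.range fun i => P i j) :=
  ⟨0, by rintro _ ⟨i, rfl⟩; exact (hP i).2.1 j⟩

theorem IsWE.iInf [Nonempty ι] (hP : ∀ i, IsWE v win (P i)) :
    IsWE v win fun j => ⨅ i, P i j := by
  have hbdd := bddBelow_range_of_forall_isWE hP
  obtain ⟨i₀⟩ := ‹Nonempty ι›
  refine ⟨(hP i₀).1, fun j => le_ciInf fun i => (hP i).2.1 j, fun j => ?_, fun j k => ?_,
    fun b hb j => le_ciInf fun i => (hP i).2.2.2.2 b hb j⟩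
  · have := ciInf_le (hbdd j) i₀
    have := (hP i₀).2.2.1 j
    linarith
  · have : v (win j) k - v (win j) j + ⨅ i, P i j ≤ ⨅ i, P i k := le_ciInf fun i => by
      have := ciInf_le (hbdd j) i
      have := (hP i).2.2.2.1 j k
      linarith
    linarith

end

theorem exists_minimum_walrasian_prices_general {N M : Type*}
    (v : N → M → ℝ)
    (win : M → N)
    (hex : ∃ p, IsWE v win p) :
    ∃ pstar : M → ℝ, IsWE v win pstar ∧
      ∀ p : M → ℝ, IsWE v win p → ∀ j, pstar j ≤ p j := by
  obtain ⟨p₀, hp₀⟩ := hex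
  have : Nonempty {p // IsWE v win p} := ⟨⟨p₀, hp₀⟩⟩
  refine ⟨fun j => ⨅ p : {p // IsWE v win p}, p.1 j, IsWE.iInf fun p => p.2, fun p hp j => ?_⟩
  exact ciInf_le (bddBelow_range_of_forall_isWE (P := Subtype.val) (fun p => p.2) j) ⟨p, hp⟩

/-- In a unit-demand market, if a Walrasian equilibrium exists and all
Walrasian equilibria have the same allocation `win`, then there exist minimum
Walrasian prices: a Walrasian equilibrium `(win, p*)` with `p* j ≤ p j` for
every item `j` and every Walrasian equilibrium `(win, p)`. -/
theorem exists_minimum_walrasian_prices {N M : Type*} [Fintype N] [Fintype M]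
    (v : N → M → ℝ) (hv : ∀ i j, 0 ≤ v i j)
    (win : M → N)
    (hex : ∃ p, IsWE v win p)
    (halloc : ∀ (win' : M → N) (p' : M → ℝ), IsWE v win' p' → win' = win) :
    ∃ pstar : M → ℝ, IsWE v win pstar ∧
      ∀ p : M → ℝ, IsWE v win p → ∀ j, pstar j ≤ p j :=
  exists_minimum_walrasian_prices_general v win hex
end

section
/- In a unit-demand market, let (win, p) be a minimum Walrasian equilibrium. Then every item j with strictly positive price p_j > 0 has a supporter: a buyer i ≠ win(j) such that either i = win(k) for some item k with v_{i,k} − p_k = v_{i,j} − p_j, or i wins no item and v_{i,j} = p_j. -/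
/-- Buyer `i` supports item `j`: `i` does not win `j`, and either `i` wins some
item `k` with `v i k - p k = v i j - p j`, or `i` wins no item and
`v i j = p j`. -/
def Supports {N M : Type*} (v : N → M → ℝ) (win : M → N) (p : M → ℝ)
    (i : N) (j : M) : Prop :=
  i ≠ win j ∧
    ((∃ k, win k = i ∧ v i k - p k = v i j - p j) ∨
      ((∀ k, win k ≠ i) ∧ v i j = p j))

/-- A minimum Walrasian equilibrium: its prices are pointwise below the prices
of every Walrasian equilibrium. -/
def IsMinWE {N M : Type*} (v : N → M → ℝ) (win : M → N) (p : M → ℝ) : Prop :=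
  IsWE v win p ∧
    ∀ (win' : M → N) (p' : M → ℝ), IsWE v win' p' → ∀ j, p j ≤ p' j

/-! If no buyer supports `j`, then every winner of another item strictly prefers it to `j` and
every unassigned buyer values `j` strictly below its price. Only finitely many buyers are
involved, so lowering `p j` by a small enough `δ > 0` keeps all these preferences and hence
still gives a Walrasian equilibrium, contradicting minimality of `p`. -/

open Filter Topology

section Equilibrium

variable {N M : Type*} {v : N → M → ℝ} {win : M → N} {p : M → ℝ}

theorem IsWE.sub_lt_of_not_supports (h : IsWE v win p) {j k : M} (hkj : k ≠ j)
    (hs : ¬ Supports v win p (win k) j) : v (win k) j - p j < v (win k) k - p k :=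
  (h.2.2.2.1 k j).lt_of_ne fun heq => hs ⟨h.1.ne hkj, Or.inl ⟨k, rfl, heq.symm⟩⟩

theorem IsWE.lt_of_not_supports (h : IsWE v win p) {i : N} {j : M} (hi : ∀ k, win k ≠ i)
    (hs : ¬ Supports v win p i j) : v i j < p j :=
  (h.2.2.2.2 i hi j).lt_of_ne fun heq => hs ⟨(hi j).symm, Or.inr ⟨hi, heq⟩⟩

theorem IsWE.update_sub [DecidableEq M] (h : IsWE v win p) {j : M} {δ : ℝ} (hδ : 0 ≤ δ)
    (hδp : δ ≤ p j) (hwinners : ∀ k ≠ j, v (win k) j - p j + δ ≤ v (win k) k - p k)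
    (hlosers : ∀ i, (∀ k, win k ≠ i) → v i j + δ ≤ p j) :
    IsWE v win (Function.update p j (p j - δ)) := by
  obtain ⟨hinj, hp0, hir, hopt, hlose⟩ := h
  refine ⟨hinj, fun k => ?_, fun k => ?_, fun k l => ?_, fun i hi k => ?_⟩ <;>
    simp only [Function.update_apply] <;> split_ifs <;> subst_vars
  · linarith
  · exact hp0 k
  · linarith [hir k]
  · exact hir k
  · rfl
  · linarith [hwinners k ‹_›]
  · linarith [hopt k l]
  · exact hopt k l
  · linarith [hlosers i hi]
  · exact hlose i hi k

theorem eventually_add_le_of_lt {a b : ℝ} (h : a < b) : ∀ᶠ δ in 𝓝[>] (0 : ℝ), a + δ ≤ b := by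
  filter_upwards [Ioo_mem_nhdsGT (sub_pos.2 h)] with δ hδ
  linarith [hδ.2]

theorem IsWE.eventually_isWE_update_sub [Finite N] [DecidableEq M] (h : IsWE v win p) {j : M}
    (hpj : 0 < p j) (hno : ∀ i, ¬ Supports v win p i j) :
    ∀ᶠ δ in 𝓝[>] (0 : ℝ), IsWE v win (Function.update p j (p j - δ)) := by
  have : Finite M := Finite.of_injective win h.1
  have hwinners : ∀ᶠ δ in 𝓝[>] (0 : ℝ), ∀ k ≠ j, v (win k) j - p j + δ ≤ v (win k) k - p k :=
    eventually_all.2 fun k => by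
      rcases eq_or_ne k j with rfl | hkj
      · exact Eventually.of_forall fun _ hkk => absurd rfl hkk
      · filter_upwards [eventually_add_le_of_lt (h.sub_lt_of_not_supports hkj (hno _))]
          with δ hδ _ using hδ
  have hlosers : ∀ᶠ δ in 𝓝[>] (0 : ℝ), ∀ i, (∀ k, win k ≠ i) → v i j + δ ≤ p j :=
    eventually_all.2 fun i => by
      by_cases hi : ∀ k, win k ≠ i
      · filter_upwards [eventually_add_le_of_lt (h.lt_of_not_supports hi (hno i))]
          with δ hδ _ using hδ
      · exact Eventually.of_forall fun _ hi' => absurd hi' hi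
  filter_upwards [self_mem_nhdsWithin, eventually_add_le_of_lt hpj, hwinners, hlosers]
    with δ hδ hδp hw hl
  exact h.update_sub (le_of_lt hδ) (by linarith) hw hl

end Equilibrium

theorem minimum_walrasian_support_general {N M : Type*} [Fintype N]
    (v : N → M → ℝ)
    (win : M → N) (p : M → ℝ)
    (hmin : IsMinWE v win p) :
    ∀ j, 0 < p j → ∃ i, Supports v win p i j := by
  classical
  intro j hpj
  by_contra! hno
  obtain ⟨hwe, hle⟩ := hmin
  obtain ⟨δ, hwe', hδ⟩ :=
    ((hwe.eventually_isWE_update_sub hpj hno).and self_mem_nhdsWithin).exists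
  have := hle win _ hwe' j
  rw [Function.update_self] at this
  linarith [show (0 : ℝ) < δ from hδ]

/-- In a minimum Walrasian equilibrium of a unit-demand market, every item with
strictly positive price has a supporter. -/
theorem minimum_walrasian_support {N M : Type*} [Fintype N] [Fintype M]
    (v : N → M → ℝ) (hv : ∀ i j, 0 ≤ v i j)
    (win : M → N) (p : M → ℝ)
    (hmin : IsMinWE v win p) :
    ∀ j, 0 < p j → ∃ i, Supports v win p i j :=
  minimum_walrasian_support_general v win p hmin
end

section
/- In a unit-demand market, every minimum Walrasian equilibrium (win, p) has a support order: an enumeration π_1,…,π_m of the items such that every item j with p_j > 0 has a supporter who either wins no item or wins an item appearing strictly after j in the enumeration. -/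
/-- `π` is a support order for `(win, p)`: an enumeration of the items such
that every item `j` with positive price has a supporter who either wins no item
or wins an item appearing strictly after `j` in the enumeration. -/
def SupportOrder {N M : Type*} [Fintype M] (v : N → M → ℝ) (win : M → N)
    (p : M → ℝ) (π : Fin (Fintype.card M) ≃ M) : Prop :=
  ∀ j, 0 < p j → ∃ i, Supports v win p i j ∧
    ((∀ k, win k ≠ i) ∨ ∃ k, win k = i ∧ π.symm j < π.symm k)

open Set

lemma exists_pos_forall_le_of_finite {ι : Type*} [Finite ι] (P : ι → Prop) (f : ι → ℝ)
    (hf : ∀ i, P i → 0 < f i) : ∃ ε > 0, ∀ i, P i → ε ≤ f i := by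
  rcases isEmpty_or_nonempty {i // P i} with h | h
  · exact ⟨1, one_pos, fun i hi => (h.false ⟨i, hi⟩).elim⟩
  · obtain ⟨⟨i₀, hi₀⟩, hmin⟩ := Finite.exists_min fun i : {i // P i} => f i
    exact ⟨f i₀, hf i₀ hi₀, fun i hi => hmin ⟨i, hi⟩⟩

section Enumeration

variable {M : Type*} [Fintype M] (P : M → Set M → Prop)

lemma exists_injective_fin_of_forall_exists (h : ∀ T : Set M, T ≠ univ → ∃ j ∉ T, P j T) :
    ∀ n ≤ Fintype.card M,
      ∃ f : Fin n → M, Function.Injective f ∧ ∀ i, P (f i) (f '' Ioi i) := by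
  intro n
  induction n with
  | zero => exact fun _ => ⟨Fin.elim0, fun i => i.elim0, fun i => i.elim0⟩
  | succ n ih =>
    intro hn
    obtain ⟨f, hf, hP⟩ := ih (by omega)
    have hrange : range f ≠ univ := fun hsurj => by
      have := Fintype.card_le_of_surjective f (range_eq_univ.1 hsurj)
      simp only [Fintype.card_fin] at this
      omega
    obtain ⟨j, hj, hPj⟩ := h _ hrange
    refine ⟨Fin.cons j f, Fin.cons_injective_iff.2 ⟨hj, hf⟩, Fin.cases ?_ fun i => ?_⟩
    · have hIoi : Ioi (0 : Fin (n + 1)) = range Fin.succ := by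
        rw [Fin.range_succ]; ext; simp [Fin.pos_iff_ne_zero]
      rwa [hIoi, ← range_comp, Fin.cons_comp_succ]
    · simpa [← Fin.image_succ_Ioi, image_image] using hP i

lemma exists_equiv_fin_of_forall_exists (h : ∀ T : Set M, T ≠ univ → ∃ j ∉ T, P j T) :
    ∃ π : Fin (Fintype.card M) ≃ M, ∀ j, P j {k | π.symm j < π.symm k} := by
  obtain ⟨f, hf, hP⟩ := exists_injective_fin_of_forall_exists P h _ le_rfl
  let π := Equiv.ofBijective f
    ((Fintype.bijective_iff_injective_and_card f).2 ⟨hf, Fintype.card_fin _⟩)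
  refine ⟨π, fun j => ?_⟩
  convert hP (π.symm j) using 1
  · exact (π.apply_symm_apply j).symm
  · exact (π.image_eq_preimage_symm (Ioi (π.symm j))).symm

end Enumeration

def SupportClosed {N M : Type*} (v : N → M → ℝ) (win : M → N) (p : M → ℝ) (S : Set M) :
    Prop :=
  ∀ k ∈ S, ∀ i, Supports v win p i k → ∃ j ∈ S, win j = i

namespace IsWE

variable {N M : Type*} {v : N → M → ℝ} {win : M → N} {p : M → ℝ}

lemma utility_lt_of_supportClosed (h : IsWE v win p) {S : Set M}
    (hS : SupportClosed v win p S) {j k : M} (hj : j ∉ S) (hk : k ∈ S) :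
    v (win j) k - p k < v (win j) j - p j := by
  obtain ⟨hinj, -, -, henvy, -⟩ := h
  refine (henvy j k).lt_of_ne fun heq => ?_
  have hjk : j ≠ k := fun e => hj (e ▸ hk)
  obtain ⟨j', hj', hwin⟩ :=
    hS k hk (win j) ⟨fun e => hjk (hinj e), Or.inl ⟨j, rfl, heq.symm⟩⟩
  exact hj (hinj hwin ▸ hj')

lemma value_lt_price_of_supportClosed (h : IsWE v win p) {S : Set M}
    (hS : SupportClosed v win p S) {i : N} (hi : ∀ j, win j ≠ i) {k : M} (hk : k ∈ S) :
    v i k < p k := by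
  refine (h.2.2.2.2 i hi k).lt_of_ne fun heq => ?_
  obtain ⟨j, -, hj⟩ := hS k hk i ⟨fun e => hi k e.symm, Or.inr ⟨hi, heq⟩⟩
  exact hi j hj

lemma sub_indicator (h : IsWE v win p) {S : Set M} {ε : ℝ} (hε : 0 ≤ ε)
    (hprice : ∀ k ∈ S, ε ≤ p k)
    (hwin : ∀ j ∉ S, ∀ k ∈ S, ε ≤ (v (win j) j - p j) - (v (win j) k - p k))
    (hlose : ∀ i, (∀ j, win j ≠ i) → ∀ k ∈ S, ε ≤ p k - v i k) :
    IsWE v win (p - S.indicator fun _ => ε) := by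
  obtain ⟨hinj, hp, hIR, henvy, hloser⟩ := h
  set p' := p - S.indicator fun _ => ε
  have hin : ∀ k ∈ S, p' k = p k - ε := fun k hk => by simp [p', hk]
  have hout : ∀ k ∉ S, p' k = p k := fun k hk => by simp [p', hk]
  have hle : ∀ k, p' k ≤ p k := fun k => by
    by_cases hk : k ∈ S
    · linarith [hin k hk]
    · exact (hout k hk).le
  refine ⟨hinj, fun j => ?_, fun j => by linarith [hIR j, hle j], fun j k => ?_,
    fun i hi k => ?_⟩
  · by_cases hj : j ∈ S
    · linarith [hin j hj, hprice j hj]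
    · exact hout j hj ▸ hp j
  · by_cases hk : k ∈ S
    · by_cases hj : j ∈ S
      · linarith [hin j hj, hin k hk, henvy j k]
      · linarith [hout j hj, hin k hk, hwin j hj k hk]
    · linarith [hout k hk, hle j, henvy j k]
  · by_cases hk : k ∈ S
    · linarith [hin k hk, hlose i hi k hk]
    · exact hout k hk ▸ hloser i hi k

end IsWE

namespace IsMinWE

variable {N M : Type*} [Finite N] [Finite M] {v : N → M → ℝ} {win : M → N} {p : M → ℝ}

lemma not_supportClosed (hmin : IsMinWE v win p) {S : Set M} (hne : S.Nonempty)
    (hpos : ∀ k ∈ S, 0 < p k) : ¬ SupportClosed v win p S := by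
  intro hS
  have hwe := hmin.1
  obtain ⟨ε₁, hε₁, hprice⟩ := exists_pos_forall_le_of_finite (· ∈ S) p hpos
  obtain ⟨ε₂, hε₂, hwin⟩ := exists_pos_forall_le_of_finite
    (fun jk : M × M => jk.1 ∉ S ∧ jk.2 ∈ S)
    (fun jk => (v (win jk.1) jk.1 - p jk.1) - (v (win jk.1) jk.2 - p jk.2))
    fun jk hjk => sub_pos.2 (hwe.utility_lt_of_supportClosed hS hjk.1 hjk.2)
  obtain ⟨ε₃, hε₃, hlose⟩ := exists_pos_forall_le_of_finite
    (fun ik : N × M => (∀ j, win j ≠ ik.1) ∧ ik.2 ∈ S) (fun ik => p ik.2 - v ik.1 ik.2)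
    fun ik hik => sub_pos.2 (hwe.value_lt_price_of_supportClosed hS hik.1 hik.2)
  set ε := min ε₁ (min ε₂ ε₃)
  have hε : 0 < ε := by positivity
  have hlower := hwe.sub_indicator (S := S) (ε := ε) hε.le
    (fun k hk => (min_le_left _ _).trans (hprice k hk))
    (fun j hj k hk => (min_le_of_right_le (min_le_left _ _)).trans (hwin (j, k) ⟨hj, hk⟩))
    (fun i hi k hk => (min_le_of_right_le (min_le_right _ _)).trans (hlose (i, k) ⟨hi, hk⟩))
  obtain ⟨k, hk⟩ := hne
  have := hmin.2 _ _ hlower k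
  simp only [Pi.sub_apply, indicator_of_mem hk] at this
  linarith

end IsMinWE

theorem minimum_walrasian_support_order_general {N M : Type*} [Fintype N] [Fintype M]
    (v : N → M → ℝ)
    (win : M → N) (p : M → ℝ)
    (hmin : IsMinWE v win p) :
    ∃ π : Fin (Fintype.card M) ≃ M, SupportOrder v win p π := by
  obtain ⟨π, hπ⟩ := exists_equiv_fin_of_forall_exists
    (fun j T => 0 < p j → ∃ i, Supports v win p i j ∧ ∀ k ∉ T, win k ≠ i) fun T hT => by
      by_contra! hstuck
      exact hmin.not_supportClosed (nonempty_compl.2 hT) (fun j hj => (hstuck j hj).1)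
        fun j hj i hi => (hstuck j hj).2 i hi
  refine ⟨π, fun j hpj => ?_⟩
  obtain ⟨i, hsupp, hlater⟩ := hπ j hpj
  refine ⟨i, hsupp, ?_⟩
  by_cases hwins : ∃ k, win k = i
  · obtain ⟨k, rfl⟩ := hwins
    exact Or.inr ⟨k, rfl, by simpa using mt (hlater k)⟩
  · exact Or.inl (not_exists.1 hwins)

/-- Every minimum Walrasian equilibrium of a unit-demand market has a support
order. -/
theorem minimum_walrasian_support_order {N M : Type*} [Fintype N] [Fintype M]
    (v : N → M → ℝ) (hv : ∀ i j, 0 ≤ v i j)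
    (win : M → N) (p : M → ℝ)
    (hmin : IsMinWE v win p) :
    ∃ π : Fin (Fintype.card M) ≃ M, SupportOrder v win p π :=
  minimum_walrasian_support_order_general v win p hmin
end

section
/- In a unit-demand market, let (win, p) be a minimum Walrasian equilibrium admitting a support order π, let f = π_1 be the first item in the support order, and let w = win(f). Let t be any buyer with t ≠ w, and consider the residual unit-demand market on the items M \ {f} with residual values v'_{i,j} = v_{i,j} for every buyer i ≠ t and v'_{t,j} = max(0, v_{t,j} − v_{t,f}). Let (win', p') be any minimum Walrasian equilibrium of this residual market. Then buyer w weakly prefers winning f at price p_f: v_{w,f} − p_f ≥ u', where u' = v_{w,g} − p'_g if win'(g) = w for some item g ∈ M \ {f}, and u' = 0 if w wins no item in (win', p'). -/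
/-!
Write `u` and `z` for the buyers' utilities in `(win, p)` and in the residual equilibrium, and
`W = ∑ j, v (win j) j`. Starting from the item of `t` (if any) and following the support order,
each item is passed to a supporter, who frees a later item; this gives a matching of the residual
market avoiding `w` of value at least `W - v w f - min (u t) (v t f)`. By weak duality for the
residual equilibrium this value is at most the residual welfare minus `z w`. Conversely, `p`
together with `u`, lowered at `t` by `min (u t) (v t f)`, is a feasible dual of the residual
market, so the residual welfare is at most `W - p f - min (u t) (v t f)`. Hence
`z w ≤ v w f - p f = u w`.
-/

open Finset Function

section Matching

variable {α β : Type*}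

def IsMatching (E : Finset (α × β)) : Prop :=
  Set.InjOn Prod.fst (E : Set (α × β)) ∧ Set.InjOn Prod.snd (E : Set (α × β))

namespace IsMatching

variable {E F : Finset (α × β)}

theorem mono (hE : IsMatching E) (hFE : F ⊆ E) : IsMatching F :=
  ⟨hE.1.mono (coe_subset.2 hFE), hE.2.mono (coe_subset.2 hFE)⟩

theorem fst_ne_of_mem_erase [DecidableEq α] [DecidableEq β] (hE : IsMatching E) {a e : α × β}
    (ha : a ∈ E) (he : e ∈ E.erase a) : e.1 ≠ a.1 := fun h =>
  (mem_erase.1 he).1 (hE.1 (mem_of_mem_erase he) ha h)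

theorem snd_ne_of_mem_erase [DecidableEq α] [DecidableEq β] (hE : IsMatching E) {a e : α × β}
    (ha : a ∈ E) (he : e ∈ E.erase a) : e.2 ≠ a.2 := fun h =>
  (mem_erase.1 he).1 (hE.2 (mem_of_mem_erase he) ha h)

theorem insert_erase [DecidableEq α] [DecidableEq β] (hE : IsMatching E) {a : α × β} (ha : a ∈ E)
    {b : β} (hb : ∀ e ∈ E, e.2 ≠ b) : IsMatching (insert (a.1, b) (E.erase a)) := by
  have hnot : (a.1, b) ∉ E.erase a := fun h => hb _ (mem_of_mem_erase h) rfl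
  unfold IsMatching
  rw [coe_insert]
  refine ⟨(Set.injOn_insert hnot).2 ⟨(hE.mono (erase_subset a E)).1, ?_⟩,
    (Set.injOn_insert hnot).2 ⟨(hE.mono (erase_subset a E)).2, ?_⟩⟩
  · rintro ⟨e, he, hea⟩
    exact hE.fst_ne_of_mem_erase ha he hea
  · rintro ⟨e, he, heb⟩
    exact hb e (mem_of_mem_erase he) heb

theorem exists_subtype (hE : IsMatching E) {P : α → Prop} (hP : ∀ e ∈ E, P e.1)
    (g : α × β → ℝ) :
    ∃ E' : Finset (Subtype P × β), IsMatching E' ∧ (∀ e ∈ E', (e.1.1, e.2) ∈ E) ∧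
      ∑ e ∈ E', g (e.1.1, e.2) = ∑ e ∈ E, g e := by
  have hφ : Injective (Prod.map (Subtype.val : Subtype P → α) (id : β → β)) :=
    Subtype.val_injective.prodMap injective_id
  refine ⟨E.preimage _ hφ.injOn, ⟨?_, ?_⟩, fun e he => (mem_preimage.1 he : Prod.map _ _ e ∈ E),
    sum_preimage _ E hφ.injOn g fun e he hne => (hne ⟨(⟨e.1, hP e he⟩, e.2), rfl⟩).elim⟩ <;>
    intro e he e' he' h <;> apply hφ
  · exact hE.1 (mem_preimage.1 he) (mem_preimage.1 he') (by simp [h])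
  · exact hE.2 (mem_preimage.1 he) (mem_preimage.1 he') (by simpa using h)

/-- Weak duality for the assignment problem. -/
theorem sum_le_sum_add_sum [DecidableEq α] [DecidableEq β] [Fintype α] (hE : IsMatching E)
    {V : β → α → ℝ} {y : β → ℝ} {q : α → ℝ} (hy : ∀ i, 0 ≤ y i) (hq : ∀ j, 0 ≤ q j)
    (hV : ∀ i j, V i j ≤ y i + q j) {B : Finset β} (hB : ∀ e ∈ E, e.2 ∈ B) :
    ∑ e ∈ E, V e.2 e.1 ≤ ∑ i ∈ B, y i + ∑ j, q j :=
  calc ∑ e ∈ E, V e.2 e.1 ≤ ∑ e ∈ E, (y e.2 + q e.1) := sum_le_sum fun e _ => hV e.2 e.1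
    _ = ∑ i ∈ E.image Prod.snd, y i + ∑ j ∈ E.image Prod.fst, q j := by
      rw [sum_add_distrib, sum_image hE.2, sum_image hE.1]
    _ ≤ ∑ i ∈ B, y i + ∑ j, q j := by
      refine add_le_add (sum_le_sum_of_subset_of_nonneg ?_ fun i _ _ => hy i)
        (sum_le_univ_sum_of_nonneg hq)
      intro i hi
      obtain ⟨e, he, rfl⟩ := mem_image.1 hi
      exact hB e he

end IsMatching

theorem sum_insert_erase_of_forall_snd_ne [DecidableEq α] [DecidableEq β] {E : Finset (α × β)}
    {a : α × β} (ha : a ∈ E) {b : β} (hb : ∀ e ∈ E, e.2 ≠ b) (g : α × β → ℝ) :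
    ∑ e ∈ insert (a.1, b) (E.erase a), g e = ∑ e ∈ E, g e - g a + g (a.1, b) := by
  rw [sum_insert fun h => hb _ (mem_of_mem_erase h) rfl, sum_erase_eq_sub ha]
  ring

def allocGraph [Fintype α] [DecidableEq α] [DecidableEq β] (win : α → β) : Finset (α × β) :=
  univ.image fun j => (j, win j)

variable [Fintype α] [DecidableEq α] [DecidableEq β]

@[simp]
theorem mem_allocGraph {win : α → β} {e : α × β} : e ∈ allocGraph win ↔ win e.1 = e.2 := by
  constructor
  · intro h
    obtain ⟨j, -, rfl⟩ := mem_image.1 h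
    rfl
  · intro h
    exact mem_image.2 ⟨e.1, mem_univ _, by rw [h]⟩

theorem sum_allocGraph (win : α → β) (g : α × β → ℝ) :
    ∑ e ∈ allocGraph win, g e = ∑ j, g (j, win j) :=
  sum_image fun _ _ _ _ h => congrArg Prod.fst h

theorem isMatching_allocGraph {win : α → β} (hwin : Injective win) :
    IsMatching (allocGraph win) := by
  constructor <;> intro e he e' he' h <;> simp only [mem_allocGraph, mem_coe] at he he'
  · exact Prod.ext h (by rw [← he, ← he', h])
  · exact Prod.ext (hwin (by rw [he, he', h])) h

end Matching

section Market

variable {N M : Type*} {v : N → M → ℝ} {win : M → N} {p : M → ℝ}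

open Classical in
noncomputable def utility (v : N → M → ℝ) (win : M → N) (p : M → ℝ) (i : N) : ℝ :=
  if h : ∃ j, win j = i then v i h.choose - p h.choose else 0

theorem utility_apply_win (hwin : Injective win) (j : M) :
    utility v win p (win j) = v (win j) j - p j := by
  have h : ∃ k, win k = win j := ⟨j, rfl⟩
  rw [utility, dif_pos h, hwin h.choose_spec]

theorem utility_eq_zero {i : N} (hi : ∀ j, win j ≠ i) : utility v win p i = 0 := by
  rw [utility, dif_neg fun ⟨j, hj⟩ => hi j hj]

namespace IsWE

theorem utility_nonneg (hwe : IsWE v win p) (i : N) : 0 ≤ utility v win p i := by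
  by_cases hi : ∃ j, win j = i
  · obtain ⟨j, rfl⟩ := hi
    rw [utility_apply_win hwe.1]
    exact hwe.2.2.1 j
  · rw [utility_eq_zero fun j hj => hi ⟨j, hj⟩]

theorem le_utility_add (hwe : IsWE v win p) (i : N) (j : M) :
    v i j ≤ utility v win p i + p j := by
  by_cases hi : ∃ k, win k = i
  · obtain ⟨k, rfl⟩ := hi
    rw [utility_apply_win hwe.1]
    linarith [hwe.2.2.2.1 k j]
  · rw [utility_eq_zero fun k hk => hi ⟨k, hk⟩, zero_add]
    exact hwe.2.2.2.2 i (fun k hk => hi ⟨k, hk⟩) j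

theorem sum_value_eq [Fintype N] [Fintype M] (hwe : IsWE v win p) :
    ∑ j, v (win j) j = ∑ i, utility v win p i + ∑ j, p j := by
  rw [← Fintype.sum_of_injective win hwe.1 (fun j => utility v win p (win j)) _
    (fun i hi => utility_eq_zero fun j hj => hi ⟨j, hj⟩) fun _ => rfl, ← sum_add_distrib]
  exact sum_congr rfl fun j _ => by rw [utility_apply_win hwe.1]; ring

end IsWE

variable [Fintype M] [DecidableEq M] [DecidableEq N]

/-- Item `c` goes to its supporter, who frees a later item, which goes to its supporter, and so
on along the support order, until a supporter wins nothing or an item has price zero. -/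
theorem SupportOrder.exists_matching_forall_snd_ne (hwin : Injective win)
    {π : Fin (Fintype.card M) ≃ M} (hπ : SupportOrder v win p π) (c : M) :
    ∃ E : Finset (M × N), IsMatching E ∧ (∀ j, π.symm j < π.symm c → (j, win j) ∈ E) ∧
      (∀ e ∈ E, e.2 ≠ win c) ∧
      ∑ j, v (win j) j - (v (win c) c - p c) ≤ ∑ e ∈ E, v e.2 e.1 := by
  obtain ⟨k, rfl⟩ := π.surjective c
  induction k using WellFoundedGT.induction with
  | _ k ih =>
    set c := π k
    have hgraph := isMatching_allocGraph hwin
    have hc : (c, win c) ∈ allocGraph win := mem_allocGraph.2 rfl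
    rcases le_or_gt (p c) 0 with hp | hp
    · refine ⟨(allocGraph win).erase (c, win c), hgraph.mono (erase_subset _ _),
        fun j hj => mem_erase.2 ⟨fun h => hj.ne (congrArg (π.symm ·.1) h), mem_allocGraph.2 rfl⟩,
        fun e he => hgraph.snd_ne_of_mem_erase hc he, ?_⟩
      rw [sum_erase_eq_sub hc, sum_allocGraph]
      linarith
    obtain ⟨i, ⟨hic, htie⟩, hlate⟩ := hπ c hp
    obtain ⟨E₀, hE₀, hbefore, hcE₀, hiE₀, hval⟩ : ∃ E₀ : Finset (M × N), IsMatching E₀ ∧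
        (∀ j, π.symm j < π.symm c → (j, win j) ∈ E₀) ∧ (c, win c) ∈ E₀ ∧
        (∀ e ∈ E₀, e.2 ≠ i) ∧ ∑ j, v (win j) j - (v i c - p c) ≤ ∑ e ∈ E₀, v e.2 e.1 := by
      rcases hlate with hlose | ⟨l, rfl, hcl⟩
      · have hvi : v i c = p c := by
          rcases htie with ⟨l, hl, -⟩ | ⟨-, h⟩
          · exact absurd hl (hlose l)
          · exact h
        refine ⟨allocGraph win, hgraph, fun j _ => mem_allocGraph.2 rfl, hc,
          fun e he h => hlose e.1 (h ▸ mem_allocGraph.1 he), ?_⟩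
        rw [sum_allocGraph, hvi, sub_self, sub_zero]
      · have hvl : v (win l) l - p l = v (win l) c - p c := by
          rcases htie with ⟨l', hl', h⟩ | ⟨hlose, -⟩
          · rwa [hwin hl'] at h
          · exact absurd rfl (hlose l)
        obtain ⟨E, hE, hbefore, hlE, hval⟩ := ih (π.symm l) (by simpa [c] using hcl)
        simp only [Equiv.apply_symm_apply] at hbefore hlE hval
        exact ⟨E, hE, fun j hj => hbefore j (hj.trans hcl), hbefore c hcl, hlE, hvl ▸ hval⟩
    refine ⟨insert (c, i) (E₀.erase (c, win c)), hE₀.insert_erase hcE₀ hiE₀, fun j hj => ?_,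
      fun e he => ?_, ?_⟩
    · exact mem_insert_of_mem (mem_erase.2 ⟨fun h => hj.ne (congrArg (π.symm ·.1) h), hbefore j hj⟩)
    · rcases mem_insert.1 he with rfl | he
      · exact hic
      · exact hE₀.snd_ne_of_mem_erase hcE₀ he
    · rw [sum_insert_erase_of_forall_snd_ne hcE₀ hiE₀]
      linarith

end Market

section Residual

variable {N M : Type*} [DecidableEq N] {v : N → M → ℝ} {win : M → N} {p : M → ℝ}

theorem SupportOrder.exists_matching_mem_forall_snd_ne [Fintype M] [DecidableEq M]
    (hwin : Injective win) {π : Fin (Fintype.card M) ≃ M} (hπ : SupportOrder v win p π) {f : M}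
    (hf : ∀ j, π.symm f ≤ π.symm j) {b : N} (hb : b ≠ win f) :
    ∃ E : Finset (M × N), IsMatching E ∧ (f, win f) ∈ E ∧ (∀ e ∈ E, e.2 ≠ b) ∧
      ∑ j, v (win j) j - utility v win p b ≤ ∑ e ∈ E, v e.2 e.1 := by
  by_cases hbwin : ∃ k, win k = b
  · obtain ⟨k, rfl⟩ := hbwin
    obtain ⟨E, hE, hbefore, hkE, hval⟩ := hπ.exists_matching_forall_snd_ne hwin k
    have hfk : π.symm f < π.symm k :=
      (hf k).lt_of_ne fun h => hb (congrArg win (π.symm.injective h)).symm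
    exact ⟨E, hE, hbefore f hfk, hkE, (utility_apply_win hwin k).symm ▸ hval⟩
  · refine ⟨allocGraph win, isMatching_allocGraph hwin, mem_allocGraph.2 rfl,
      fun e he h => hbwin ⟨e.1, (mem_allocGraph.1 he).trans h⟩, ?_⟩
    rw [utility_eq_zero fun k hk => hbwin ⟨k, hk⟩, sum_allocGraph, sub_zero]

def residualValues (v : N → M → ℝ) (t : N) (f : M) (i : N) (j : M) : ℝ :=
  if i = t then max 0 (v t j - v t f) else v i j

theorem sum_residualValues_of_forall_snd_ne {t : N} {f : M} {E : Finset (M × N)}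
    (hE : ∀ e ∈ E, e.2 ≠ t) :
    ∑ e ∈ E, residualValues v t f e.2 e.1 = ∑ e ∈ E, v e.2 e.1 :=
  sum_congr rfl fun e he => if_neg (hE e he)

theorem IsMatching.sum_sub_le_sum_residualValues [DecidableEq M] {E : Finset (M × N)}
    (hE : IsMatching E) {t : N} {f : M} (htf : 0 ≤ v t f) :
    ∑ e ∈ E, v e.2 e.1 - v t f ≤ ∑ e ∈ E, residualValues v t f e.2 e.1 := by
  by_cases ht : ∃ a ∈ E, a.2 = t
  · obtain ⟨a, ha, rfl⟩ := ht
    have hrest := sum_residualValues_of_forall_snd_ne (v := v) (f := f)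
      fun e he => hE.snd_ne_of_mem_erase ha he
    rw [← add_sum_erase _ _ ha, ← add_sum_erase _ _ ha, hrest, residualValues, if_pos rfl]
    linarith [le_max_right 0 (v a.2 a.1 - v a.2 f)]
  · simp only [not_exists, not_and] at ht
    rw [sum_residualValues_of_forall_snd_ne ht]
    linarith

theorem IsWE.residualValues_le (hwe : IsWE v win p) (t : N) (f : M) (i : N) (j : M) :
    residualValues v t f i j ≤
      utility v win p i - (if i = t then min (utility v win p t) (v t f) else 0) + p j := by
  have hvij := hwe.le_utility_add i j
  rw [residualValues]
  split_ifs with hi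
  · subst hi
    exact max_le (by linarith [min_le_left (utility v win p i) (v i f), hwe.2.1 j])
      (by linarith [min_le_right (utility v win p i) (v i f)])
  · linarith

theorem SupportOrder.exists_matching_residualValues [Fintype M] [DecidableEq M]
    (hwin : Injective win) {π : Fin (Fintype.card M) ≃ M} (hπ : SupportOrder v win p π) {f : M}
    (hf : ∀ j, π.symm f ≤ π.symm j) {t : N} (ht : t ≠ win f) (htf : 0 ≤ v t f) :
    ∃ E : Finset (M × N), IsMatching E ∧ (∀ e ∈ E, e.1 ≠ f ∧ e.2 ≠ win f) ∧
      ∑ j, v (win j) j - v (win f) f - min (utility v win p t) (v t f) ≤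
        ∑ e ∈ E, residualValues v t f e.2 e.1 := by
  obtain ⟨E, hE, hfE, hval⟩ : ∃ E : Finset (M × N), IsMatching E ∧ (f, win f) ∈ E ∧
      ∑ j, v (win j) j - min (utility v win p t) (v t f) ≤
        ∑ e ∈ E, residualValues v t f e.2 e.1 := by
    rcases le_total (utility v win p t) (v t f) with hle | hle
    · obtain ⟨E, hE, hfE, htE, hval⟩ := hπ.exists_matching_mem_forall_snd_ne hwin hf ht
      refine ⟨E, hE, hfE, ?_⟩
      rwa [sum_residualValues_of_forall_snd_ne htE, min_eq_left hle]
    · have hgraph := isMatching_allocGraph hwin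
      refine ⟨allocGraph win, hgraph, mem_allocGraph.2 rfl, ?_⟩
      rw [min_eq_right hle]
      simpa [sum_allocGraph] using hgraph.sum_sub_le_sum_residualValues htf
  refine ⟨E.erase (f, win f), hE.mono (erase_subset _ _),
    fun e he => ⟨hE.fst_ne_of_mem_erase hfE he, hE.snd_ne_of_mem_erase hfE he⟩, ?_⟩
  rw [sum_erase_eq_sub hfE, residualValues, if_neg ht.symm]
  linarith

theorem SupportOrder.utility_residual_le [Fintype N] [Fintype M] [DecidableEq M]
    (hwe : IsWE v win p) {π : Fin (Fintype.card M) ≃ M} (hπ : SupportOrder v win p π) {f : M}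
    (hf : ∀ j, π.symm f ≤ π.symm j) {t : N} (ht : t ≠ win f) (htf : 0 ≤ v t f)
    {v' : N → {j // j ≠ f} → ℝ} (hv' : ∀ i j, v' i j = residualValues v t f i j)
    {win' : {j // j ≠ f} → N} {p' : {j // j ≠ f} → ℝ} (hwe' : IsWE v' win' p') :
    utility v' win' p' (win f) ≤ utility v win p (win f) := by
  set u := utility v win p
  set z := utility v' win' p'
  obtain ⟨E, hE, hEf, hval⟩ := hπ.exists_matching_residualValues hwe.1 hf ht htf
  obtain ⟨E', hE', hE'E, hval'⟩ := hE.exists_subtype (P := (· ≠ f)) (fun e he => (hEf e he).1)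
    fun e => residualValues v t f e.2 e.1
  simp only [← hv'] at hval'
  have hmatching_le := hE'.sum_le_sum_add_sum hwe'.utility_nonneg hwe'.2.1 hwe'.le_utility_add
    (B := univ.erase (win f)) fun e he => mem_erase.2 ⟨(hEf _ (hE'E e he)).2, mem_univ _⟩
  set y : N → ℝ := fun i => u i - if i = t then min (u t) (v t f) else 0
  have hy : ∀ i, 0 ≤ y i := fun i => by
    by_cases hi : i = t
    · simp only [y, hi, if_pos, sub_nonneg, min_le_left]
    · simpa [y, hi] using hwe.utility_nonneg i
  have hy_feas : ∀ i (j : {j // j ≠ f}), v' i j ≤ y i + p j := fun i j =>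
    (hv' i j).trans_le (hwe.residualValues_le t f i j)
  have hwelfare_le := (isMatching_allocGraph hwe'.1).sum_le_sum_add_sum hy (fun j => hwe.2.1 j)
    hy_feas (B := univ) fun _ _ => mem_univ _
  rw [sum_allocGraph] at hwelfare_le
  have hsum_y : ∑ i, y i = ∑ i, u i - min (u t) (v t f) := by
    simp [y, sum_sub_distrib]
  have hsum_p : ∑ j : {j // j ≠ f}, p j = ∑ j, p j - p f := by
    rw [← sum_subtype (univ.erase f) (by simp), sum_erase_eq_sub (mem_univ f)]
  have hsum_z : ∑ i ∈ univ.erase (win f), z i = ∑ i, z i - z (win f) :=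
    sum_erase_eq_sub (mem_univ _)
  linarith [hwe.sum_value_eq, hwe'.sum_value_eq, utility_apply_win (v := v) (p := p) hwe.1 f]

end Residual

theorem winner_prefers_first_item_general {N M : Type*} [Fintype N] [Fintype M]
    [DecidableEq N]
    (v : N → M → ℝ) (hv : ∀ i j, 0 ≤ v i j)
    (win : M → N) (p : M → ℝ)
    (hmin : IsMinWE v win p)
    (hm : 0 < Fintype.card M)
    (π : Fin (Fintype.card M) ≃ M)
    (hπ : SupportOrder v win p π)
    (f : M) (hf : f = π ⟨0, hm⟩)
    (w : N) (hw : w = win f)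
    (t : N) (ht : t ≠ w)
    (v' : N → {j : M // j ≠ f} → ℝ)
    (hv' : ∀ i j, v' i j = if i = t then max 0 (v t j - v t f) else v i j)
    (win' : {j : M // j ≠ f} → N) (p' : {j : M // j ≠ f} → ℝ)
    (hmin' : IsMinWE v' win' p') :
    (∀ g : {j : M // j ≠ f}, win' g = w → v w g - p' g ≤ v w f - p f) ∧
    ((∀ g : {j : M // j ≠ f}, win' g ≠ w) → 0 ≤ v w f - p f) := by
  classical
  obtain ⟨hwe, -⟩ := hmin
  obtain ⟨hwe', -⟩ := hmin'
  subst hw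
  have hfirst : ∀ j, π.symm f ≤ π.symm j := fun j => by
    rw [hf, Equiv.symm_apply_apply]
    exact Fin.le_iff_val_le_val.2 (Nat.zero_le _)
  have hle := hπ.utility_residual_le hwe hfirst ht (hv t f) hv' hwe'
  rw [utility_apply_win hwe.1] at hle
  refine ⟨fun g hg => ?_, fun _ => hwe.2.2.1 f⟩
  rwa [← hg, utility_apply_win hwe'.1, hv', if_neg (hg ▸ ht).symm, hg] at hle

/-- Let `(win, p)` be a minimum Walrasian equilibrium with a support order `π`,
let `f = π 1` be the first item in the support order, and `w = win f`.  If any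
other buyer `t` takes `f` instead, then in any minimum Walrasian equilibrium
`(win', p')` of the residual market on `M \ {f}` — with values
`v' t j = max 0 (v t j - v t f)` and `v' i j = v i j` for `i ≠ t` — buyer `w`
weakly prefers winning `f` at price `p f` to his residual outcome. -/
theorem winner_prefers_first_item {N M : Type*} [Fintype N] [Fintype M]
    [DecidableEq M] [DecidableEq N]
    (v : N → M → ℝ) (hv : ∀ i j, 0 ≤ v i j)
    (win : M → N) (p : M → ℝ)
    (hmin : IsMinWE v win p)
    (hm : 0 < Fintype.card M)
    (π : Fin (Fintype.card M) ≃ M)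
    (hπ : SupportOrder v win p π)
    (f : M) (hf : f = π ⟨0, hm⟩)
    (w : N) (hw : w = win f)
    (t : N) (ht : t ≠ w)
    (v' : N → {j : M // j ≠ f} → ℝ)
    (hv' : ∀ i j, v' i j = if i = t then max 0 (v t j - v t f) else v i j)
    (win' : {j : M // j ≠ f} → N) (p' : {j : M // j ≠ f} → ℝ)
    (hmin' : IsMinWE v' win' p') :
    (∀ g : {j : M // j ≠ f}, win' g = w → v w g - p' g ≤ v w f - p f) ∧
    ((∀ g : {j : M // j ≠ f}, win' g ≠ w) → 0 ≤ v w f - p f) :=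
  winner_prefers_first_item_general v hv win p hmin hm π hπ f hf w hw t ht v' hv' win' p' hmin'
end

section
/- Let m ≥ 1 and ε > 0, and consider the unit-demand market with items 1,…,m and buyers b_0, b_1,…,b_m, where: b_0 values item 1 at 1 and all other items at 0; for 1 ≤ i ≤ m−1, buyer b_i values items i and i+1 at 1 + iε and all other items at 0; and buyer b_m values item m at 1 + mε and all other items at 0. Then every Walrasian equilibrium of this market has revenue Σ_j p_j ≥ m, and the allocation win(j) = b_j for every item j together with prices p_j = 1 for every item j is a Walrasian equilibrium with revenue exactly m; hence the minimal Walrasian revenue of this market is m. -/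
/-!
In any equilibrium of the chain market some buyer is left without an item. It must be `b₀`:
if `b_{k+1}` were left out, the price of item `k+1` would be at least `1 + (k+1)ε`, more than
its only other interested buyer `b_k` can pay. So item `1` costs at least `b₀`'s value `1`,
which makes `b₁` its winner. Inductively, if `b_k` wins item `k` at price at least `1`, it is
indifferent in value between items `k` and `k+1`, so envy-freeness forces item `k+1` to be at
least as expensive; item `k+1` then goes to `b_{k+1}`, because `b_k` is taken. Hence every price
is at least `1`.
-/

theorem Function.exists_forall_ne_of_card_lt {M N : Type*} [Fintype M] [Fintype N] (f : M → N)
    (hcard : Fintype.card M < Fintype.card N) : ∃ i, ∀ j, f j ≠ i := by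
  by_contra! hsurj
  exact (Fintype.card_le_of_surjective f hsurj).not_gt hcard

/-- Items `0, …, m-1` stand for items `1, …, m` and buyers `0, …, m` for `b₀, …, b_m`. -/
def chainValue (m : ℕ) (ε : ℝ) (i : Fin (m + 1)) (j : Fin m) : ℝ :=
  if (i : ℕ) = 0 then (if (j : ℕ) = 0 then 1 else 0)
  else if (j : ℕ) = (i : ℕ) - 1 ∨ (j : ℕ) = (i : ℕ) then 1 + (i : ℕ) * ε
  else 0

section chainValue

variable {m : ℕ} {ε : ℝ}

theorem chainValue_le (hε : 0 ≤ ε) (i : Fin (m + 1)) (j : Fin m) :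
    chainValue m ε i j ≤ 1 + (i : ℕ) * ε := by
  have : 0 ≤ (i : ℕ) * ε := by positivity
  unfold chainValue
  split_ifs <;> linarith

theorem chainValue_zero_of_val_eq_zero {j : Fin m} (hj : (j : ℕ) = 0) :
    chainValue m ε 0 j = 1 := by
  simp [chainValue, hj]

theorem chainValue_succ {i j : Fin m} (hij : (j : ℕ) = i ∨ (j : ℕ) = i + 1) :
    chainValue m ε i.succ j = 1 + (i.succ : ℕ) * ε := by
  simp [chainValue, hij]

theorem eq_castSucc_or_eq_succ_of_chainValue_pos {i : Fin (m + 1)} {j : Fin m}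
    (h : 0 < chainValue m ε i j) : i = j.castSucc ∨ i = j.succ := by
  unfold chainValue at h
  split_ifs at h with hi hj hij
  · exact .inl (Fin.ext (by simp [hi, hj]))
  · exact absurd h (lt_irrefl 0)
  · rcases hij with hij | hij
    · exact .inr (Fin.ext (by simp; omega))
    · exact .inl (Fin.ext (by simp [hij]))
  · exact absurd h (lt_irrefl 0)

end chainValue

section Equilibrium

variable {m : ℕ} {ε : ℝ} {win : Fin m → Fin (m + 1)} {p : Fin m → ℝ}

theorem IsWE.chainValue_win_eq_castSucc_or_succ (h : IsWE (chainValue m ε) win p) {j : Fin m}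
    (hp : 0 < p j) : win j = j.castSucc ∨ win j = j.succ :=
  eq_castSucc_or_eq_succ_of_chainValue_pos (by linarith [h.2.2.1 j])

theorem IsWE.chainValue_unallocated_eq_zero (hε : 0 < ε) (h : IsWE (chainValue m ε) win p)
    {i : Fin (m + 1)} (hi : ∀ j, win j ≠ i) : i = 0 := by
  by_contra hi0
  obtain ⟨k, rfl⟩ := Fin.exists_succ_eq.mpr hi0
  have hpk : 1 + (k.succ : ℕ) * ε ≤ p k := by
    simpa [chainValue_succ (.inl rfl)] using h.2.2.2.2 _ hi k
  have hpos : 0 < p k := by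
    have : 0 ≤ (k.succ : ℕ) * ε := by positivity
    linarith
  have hwin : win k = k.castSucc :=
    (h.chainValue_win_eq_castSucc_or_succ hpos).resolve_right (hi k)
  have hle := chainValue_le hε.le (win k) k
  have hir := h.2.2.1 k
  rw [hwin] at hle hir
  simp only [Fin.val_castSucc, Fin.val_succ, Nat.cast_add, Nat.cast_one] at hle hpk
  linarith

theorem IsWE.chainValue_win_eq_succ (h : IsWE (chainValue m ε) win p)
    (h0 : ∀ j, win j ≠ 0) (j : Fin m) : win j = j.succ ∧ 1 ≤ p j := by
  obtain ⟨n, hn⟩ := j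
  induction n with
  | zero =>
    have hp : 1 ≤ p ⟨0, hn⟩ := by
      simpa [chainValue_zero_of_val_eq_zero] using h.2.2.2.2 0 h0 ⟨0, hn⟩
    exact ⟨(h.chainValue_win_eq_castSucc_or_succ (by linarith)).resolve_left (h0 _), hp⟩
  | succ n ih =>
    set j : Fin m := ⟨n, by omega⟩
    set k : Fin m := ⟨n + 1, hn⟩
    obtain ⟨hwin, hpj⟩ := ih (by omega)
    -- The winner `j.succ` of `j` values `j` and `k` equally, so envy-freeness gives `p j ≤ p k`.
    have henvy := h.2.2.2.1 j k
    rw [hwin, chainValue_succ (.inr rfl), chainValue_succ (.inl rfl)] at henvy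
    have hpk : 1 ≤ p k := by linarith
    refine ⟨(h.chainValue_win_eq_castSucc_or_succ (by linarith)).resolve_left fun hk => ?_, hpk⟩
    have : k = j := h.1 (hk.trans (hwin.trans (Fin.ext rfl)).symm)
    simp [Fin.ext_iff, k, j] at this

theorem IsWE.chainValue_revenue_ge (hε : 0 < ε) (h : IsWE (chainValue m ε) win p) :
    (m : ℝ) ≤ ∑ j, p j := by
  obtain ⟨i, hi⟩ := win.exists_forall_ne_of_card_lt (by simp)
  have h0 : ∀ j, win j ≠ 0 := h.chainValue_unallocated_eq_zero hε hi ▸ hi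
  calc (m : ℝ) = ∑ _j : Fin m, (1 : ℝ) := by simp
    _ ≤ ∑ j, p j := Finset.sum_le_sum fun j _ => (h.chainValue_win_eq_succ h0 j).2

end Equilibrium

theorem isWE_chainValue_succ_one {m : ℕ} {ε : ℝ} (hε : 0 ≤ ε) :
    IsWE (chainValue m ε) Fin.succ (fun _ => 1) := by
  refine ⟨Fin.succ_injective _, fun _ => zero_le_one, fun j => ?_, fun j k => ?_, fun i hi j => ?_⟩
  · have : 0 ≤ (j.succ : ℕ) * ε := by positivity
    rw [chainValue_succ (.inl rfl)]
    linarith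
  · simpa only [chainValue_succ (.inl rfl), sub_le_sub_iff_right] using chainValue_le hε j.succ k
  · obtain rfl : i = 0 := by
      by_contra hi0
      obtain ⟨k, rfl⟩ := Fin.exists_succ_eq.mpr hi0
      exact hi k rfl
    unfold chainValue
    split_ifs <;> norm_num

theorem minimal_walrasian_revenue_example_general (m : ℕ) (ε : ℝ)
    (hε : 0 < ε)
    (v : Fin (m + 1) → Fin m → ℝ)
    (hv : ∀ i j, v i j =
      if (i : ℕ) = 0 then (if (j : ℕ) = 0 then 1 else 0)
      else if (j : ℕ) = (i : ℕ) - 1 ∨ (j : ℕ) = (i : ℕ) then 1 + (i : ℕ) * ε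
      else 0) :
    (∀ (win : Fin m → Fin (m + 1)) (p : Fin m → ℝ),
        IsWE v win p → (m : ℝ) ≤ ∑ j, p j) ∧
    IsWE v (fun j => Fin.succ j) (fun _ => 1) ∧
    (∑ _j : Fin m, (1 : ℝ)) = m := by
  obtain rfl : v = chainValue m ε := funext fun i => funext (hv i)
  exact ⟨fun _ _ h => h.chainValue_revenue_ge hε, isWE_chainValue_succ_one hε.le, by simp⟩

/-- Items `0, …, m-1` stand for items `1, …, m` and buyers `0, …, m` stand for
`b₀, …, b_m`.  Buyer `b₀` values item `1` at `1`; buyer `b_i` (`1 ≤ i ≤ m-1`)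
values items `i` and `i+1` at `1 + i·ε`; buyer `b_m` values item `m` at
`1 + m·ε`; all other values are `0`.  Every Walrasian equilibrium of this
unit-demand market has revenue at least `m`, and allocating item `i` to buyer
`b_i` at price `1` is a Walrasian equilibrium of revenue exactly `m`; hence the
minimal Walrasian revenue of this market is `m`. -/
theorem minimal_walrasian_revenue_example (m : ℕ) (hm : 1 ≤ m) (ε : ℝ)
    (hε : 0 < ε)
    (v : Fin (m + 1) → Fin m → ℝ)
    (hv : ∀ i j, v i j =
      if (i : ℕ) = 0 then (if (j : ℕ) = 0 then 1 else 0)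
      else if (j : ℕ) = (i : ℕ) - 1 ∨ (j : ℕ) = (i : ℕ) then 1 + (i : ℕ) * ε
      else 0) :
    (∀ (win : Fin m → Fin (m + 1)) (p : Fin m → ℝ),
        IsWE v win p → (m : ℝ) ≤ ∑ j, p j) ∧
    IsWE v (fun j => Fin.succ j) (fun _ => 1) ∧
    (∑ _j : Fin m, (1 : ℝ)) = m :=
  minimal_walrasian_revenue_example_general m ε hε v hv
end

section
/- Consider a first price auction for a single item among a finite set N of at least two buyers with pairwise distinct nonnegative valuations v_i, and let w be the buyer with the highest valuation. A bid profile assigns to each buyer i a bid b_i with 0 ≤ b_i ≤ v_i (conservative bidding); the winner is the buyer with the highest bid, where ties among highest bidders are broken in favor of the tied buyer with the highest valuation; the winner's utility is v_i − b_i and every other buyer's utility is 0. Suppose the bid profile is a pure Nash equilibrium: no buyer i can strictly increase her utility by unilaterally changing her bid to any value c with 0 ≤ c ≤ v_i. Then the winner is w and the winning bid equals the second-highest valuation max_{i ≠ w} v_i. -/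
/-- Buyer `i` wins the single-item first price auction with valuations `v` and
bids `b`: every other buyer either bids strictly less, or bids the same and has
a strictly smaller valuation (ties among highest bidders are broken in favor of
the tied buyer with the highest valuation). -/
def Wins {N : Type*} (v b : N → ℝ) (i : N) : Prop :=
  ∀ k, k ≠ i → b k < b i ∨ (b k = b i ∧ v k < v i)

open scoped Classical in
/-- Quasilinear utility of buyer `i` in the first price auction: `v i - b i` if
`i` wins, and `0` otherwise. -/
noncomputable def fpaUtil {N : Type*} (v b : N → ℝ) (i : N) : ℝ :=
  if Wins v b i then v i - b i else 0

/-!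
Against any conservative profile, the top buyer `w` can secure `v w - s` by bidding the
second-highest valuation `s`: everyone else bids at most `s` and loses ties to `w`. As
`v w - s > 0` and losers get `0`, `w` wins in equilibrium and bids at most `s`. Conversely, if
`w` won with a bid below `s`, the buyer with valuation `s` could outbid `w` strictly below `s`
and make a profit.
-/

section Wins

variable {N : Type*} {v b : N → ℝ} {i j : N}

theorem fpaUtil_of_wins (h : Wins v b i) : fpaUtil v b i = v i - b i := if_pos h

theorem fpaUtil_of_not_wins (h : ¬ Wins v b i) : fpaUtil v b i = 0 := if_neg h

theorem wins_of_fpaUtil_pos (h : 0 < fpaUtil v b i) : Wins v b i := by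
  by_contra hi
  exact h.ne' (fpaUtil_of_not_wins hi)

theorem Wins.bid_le (h : Wins v b i) (k : N) : b k ≤ b i := by
  rcases eq_or_ne k i with rfl | hk
  · exact le_rfl
  · rcases h k hk with hlt | ⟨heq, -⟩
    exacts [hlt.le, heq.le]

theorem Wins.not_wins (h : Wins v b i) (hj : j ≠ i) : ¬ Wins v b j := by
  intro hwj
  rcases h j hj with hlt | ⟨heq, hvlt⟩
  · exact (hwj.bid_le i).not_gt hlt
  · rcases hwj i hj.symm with hlt' | ⟨-, hvlt'⟩
    exacts [heq.not_gt hlt', hvlt.not_gt hvlt']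

theorem Wins.fpaUtil_eq_zero (h : Wins v b i) (hj : j ≠ i) : fpaUtil v b j = 0 :=
  fpaUtil_of_not_wins (h.not_wins hj)

variable [DecidableEq N] {c : ℝ}

theorem wins_update_self_of_lt (h : ∀ k, k ≠ i → b k < c) :
    Wins v (Function.update b i c) i := fun k hk => by
  rw [Function.update_self, Function.update_of_ne hk]
  exact Or.inl (h k hk)

theorem wins_update_self_of_le (hb : ∀ k, k ≠ i → b k ≤ c) (hv : ∀ k, k ≠ i → v k < v i) :
    Wins v (Function.update b i c) i := fun k hk => by
  rw [Function.update_self, Function.update_of_ne hk]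
  exact (hb k hk).lt_or_eq.imp_right fun heq => ⟨heq, hv k hk⟩

end Wins

def IsConservativeNashEq {N : Type*} [DecidableEq N] (v b : N → ℝ) : Prop :=
  ∀ (i : N) (c : ℝ), 0 ≤ c → c ≤ v i →
    fpaUtil v (Function.update b i c) i ≤ fpaUtil v b i

namespace IsConservativeNashEq

variable {N : Type*} [DecidableEq N] {v b : N → ℝ} (hNE : IsConservativeNashEq v b)
  {i j : N} {c : ℝ}
include hNE

theorem sub_le_fpaUtil (hc₀ : 0 ≤ c) (hc : c ≤ v i) (hwin : Wins v (Function.update b i c) i) :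
    v i - c ≤ fpaUtil v b i := by
  simpa [fpaUtil_of_wins hwin] using hNE i c hc₀ hc

theorem wins_and_bid_le (hv : ∀ k, k ≠ i → v k < v i) (hb : ∀ k, k ≠ i → b k ≤ c)
    (hc₀ : 0 ≤ c) (hc : c < v i) : Wins v b i ∧ b i ≤ c := by
  have hutil : v i - c ≤ fpaUtil v b i :=
    hNE.sub_le_fpaUtil hc₀ hc.le (wins_update_self_of_le hb hv)
  have hwin : Wins v b i := wins_of_fpaUtil_pos (by linarith)
  rw [fpaUtil_of_wins hwin] at hutil
  exact ⟨hwin, by linarith⟩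

theorem le_bid_of_wins (hwin : Wins v b i) (hb₀ : 0 ≤ b i) (hj : j ≠ i) : v j ≤ b i := by
  by_contra! hlt
  obtain ⟨c, hbc, hcv⟩ := exists_between hlt
  have hc : ∀ k, k ≠ j → b k < c := fun k _ => (hwin.bid_le k).trans_lt hbc
  have hutil := hNE.sub_le_fpaUtil (hb₀.trans hbc.le) hcv.le (wins_update_self_of_lt hc)
  rw [hwin.fpaUtil_eq_zero hj] at hutil
  linarith

end IsConservativeNashEq

/-- In a first price auction for a single item among at least two buyers with
pairwise distinct nonnegative valuations, in every conservative pure Nash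
equilibrium the buyer `w` with the highest valuation wins, and the winning bid
equals the second-highest valuation. -/
theorem first_price_conservative_equilibrium {N : Type*} [Fintype N]
    [DecidableEq N] (hN : 2 ≤ Fintype.card N)
    (v : N → ℝ) (hinj : Function.Injective v)
    (w : N) (hw : ∀ i, v i ≤ v w)
    (b : N → ℝ) (hb : ∀ i, 0 ≤ b i ∧ b i ≤ v i)
    (hNE : ∀ (i : N) (c : ℝ), 0 ≤ c → c ≤ v i →
        fpaUtil v (Function.update b i c) i ≤ fpaUtil v b i) :
    Wins v b w ∧
      b w = (Finset.univ.erase w).sup'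
        (by
          rw [← Finset.card_pos, Finset.card_erase_of_mem (Finset.mem_univ w),
            Finset.card_univ]
          omega) v := by
  replace hNE : IsConservativeNashEq v b := hNE
  have hne : (Finset.univ.erase w).Nonempty :=
    let ⟨k, hk⟩ := Fintype.exists_ne_of_one_lt_card hN w
    ⟨k, Finset.mem_erase.mpr ⟨hk, Finset.mem_univ k⟩⟩
  obtain ⟨j, hjmem, hjs⟩ := Finset.exists_mem_eq_sup' hne v
  set s := (Finset.univ.erase w).sup' hne v
  have hjw : j ≠ w := (Finset.mem_erase.mp hjmem).1
  have hvw : ∀ k, k ≠ w → v k < v w := fun k hk => (hw k).lt_of_ne (hinj.ne hk)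
  have hvs : ∀ k, k ≠ w → v k ≤ s := fun k hk => Finset.le_sup' v (by simpa using hk)
  obtain ⟨hwin, hbw⟩ := hNE.wins_and_bid_le hvw (fun k hk => (hb k).2.trans (hvs k hk))
    ((hb j).1.trans ((hb j).2.trans hjs.ge)) (hjs ▸ hvw j hjw)
  exact ⟨hwin, hbw.antisymm (hjs ▸ hNE.le_bid_of_wins hwin (hb w).1 hjw)⟩
end
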